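/- arXiv:math/0609826 — 7 statements merged into one kernel-verified Lean document; each statement's English description precedes it below -/
import Mathlib

section
/- Let d ≥ 1 and let μ be a probability mass function on ℤ^d. Suppose there exist constants C₁, C₂ > 0 such that the n-fold convolution powers of μ satisfy μ^{*n}(y) ≤ C₁ n^{-d/2} exp(−C₂|y|²/n) for every integer n ≥ 1 and every y ∈ ℤ^d. Then there exist constants κ₁, κ₂ > 0, depending only on d, C₁, C₂, such that for every real t ≥ 1/2 and every y ∈ ℤ^d one has q_t(y) ≤ κ₁ t^{-d/2} exp(−κ₂|y|/√t). -/
open MeasureTheory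

/-- Euclidean norm of a lattice point `y ∈ ℤ^d`. -/
noncomputable def znorm {d : ℕ} (y : Fin d → ℤ) : ℝ :=
  Real.sqrt (∑ i, ((y i : ℝ)) ^ 2)

/-- `n`-fold convolution power of a pmf `μ` on `ℤ^d`
(with `μ^{*0}` the point mass at `0`). -/
noncomputable def convPow {d : ℕ} (μ : (Fin d → ℤ) → ℝ) : ℕ → (Fin d → ℤ) → ℝ
  | 0 => fun y => if y = 0 then 1 else 0
  | n + 1 => fun y => ∑' z : Fin d → ℤ, convPow μ n z * μ (y - z)

/-- Continuous-time transition kernel `q_t(y) = Σ_n e^{-t} t^n/n! μ^{*n}(y)`. -/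
noncomputable def qKer {d : ℕ} (μ : (Fin d → ℤ) → ℝ) (t : ℝ) (y : Fin d → ℤ) : ℝ :=
  ∑' n : ℕ, Real.exp (-t) * t ^ n / (Nat.factorial n) * convPow μ n y

/-! The Gaussian bound and AM-GM, `C₂|y|²/n + n/t ≥ 2√C₂|y|/√t`, give
`μ^{*n}(y) ≤ C₁ n^{-d/2} e^{n/t} e^{-2√C₂|y|/√t}`. Average over a Poisson(t) number `N` of
steps. On `N ≥ t/2` the factor `n^{-d/2}` is at most `2^{d/2} t^{-d/2}`, and
`E[e^{N/t}] = exp (t (e^{1/t} - 1))` is bounded for `t ≥ 1/2`. The event `N ≤ t/2` has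
probability at most `e^{t/2} E[e^{-N}] = e^{-(1/2 - e^{-1}) t}`, which decays faster than any
power of `t`. -/

open Real

noncomputable def poissonWeight (t : ℝ) (n : ℕ) : ℝ := exp (-t) * t ^ n / n.factorial

lemma poissonWeight_nonneg {t : ℝ} (ht : 0 ≤ t) (n : ℕ) : 0 ≤ poissonWeight t n := by
  unfold poissonWeight; positivity

lemma hasSum_poissonWeight_mul_pow (t a : ℝ) :
    HasSum (fun n ↦ poissonWeight t n * a ^ n) (exp (t * (a - 1))) := by
  have h := (NormedSpace.expSeries_div_hasSum_exp (t * a)).mul_left (exp (-t))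
  rw [← exp_eq_exp_ℝ, ← exp_add, show -t + t * a = t * (a - 1) by ring] at h
  exact h.congr_fun fun n ↦ by simp only [poissonWeight, mul_pow]; ring

lemma two_mul_sqrt_mul_div_sqrt_le {c x t : ℝ} (hc : 0 ≤ c) (hx : 0 < x) (ht : 0 < t) (r : ℝ) :
    2 * √c * r / √t ≤ c * r ^ 2 / x + x / t := by
  have hst : 0 < √t := sqrt_pos.mpr ht
  have key : 0 ≤ (√c * r * √t - x) ^ 2 := sq_nonneg _
  rw [div_add_div _ _ hx.ne' ht.ne', div_le_div_iff₀ hst (by positivity)]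
  have e : √t * (√c * r * √t - x) ^ 2 = (c * r ^ 2 * t + x * x) * √t - 2 * √c * r * (x * t) := by
    linear_combination (√t * r ^ 2 * √c ^ 2 - 2 * √c * r * x) * sq_sqrt ht.le +
      (√t * r ^ 2 * t) * sq_sqrt hc
  nlinarith [mul_nonneg hst.le key]

lemma exp_sub_one_le_mul_exp (x : ℝ) : exp x - 1 ≤ x * exp x := by
  have h := mul_le_mul_of_nonneg_right (one_sub_le_exp_neg x) (exp_pos x).le
  rw [← exp_add, neg_add_cancel, exp_zero] at h
  linarith

lemma rpow_le_one_add_pow {t a : ℝ} {k : ℕ} (ht : 0 ≤ t) (ha : 0 ≤ a) (hak : a ≤ k) :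
    t ^ a ≤ 1 + t ^ k := by
  rcases le_total t 1 with h | h
  · linarith [rpow_le_one ht h ha, pow_nonneg ht k]
  · rw [← rpow_natCast]
    linarith [rpow_le_rpow_of_exponent_le h hak]

lemma pow_mul_exp_neg_mul_le {b t : ℝ} (hb : 0 < b) (ht : 0 ≤ t) (k : ℕ) :
    t ^ k * exp (-(b * t)) ≤ k.factorial / b ^ k := by
  have h := Real.pow_div_factorial_le_exp (x := b * t) (mul_nonneg hb.le ht) k
  rw [div_le_iff₀ (by positivity), mul_pow] at h
  rw [le_div_iff₀ (by positivity), exp_neg, ← div_eq_mul_inv, div_mul_eq_mul_div,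
    div_le_iff₀ (exp_pos _)]
  linarith

lemma exp_neg_mul_le_mul_rpow_neg {b t a : ℝ} {k : ℕ} (hb : 0 < b) (ht : 0 < t) (ha : 0 ≤ a)
    (hak : a ≤ k) : exp (-(b * t)) ≤ (1 + k.factorial / b ^ k) * t ^ (-a) := by
  have hbound : t ^ a * exp (-(b * t)) ≤ 1 + k.factorial / b ^ k := by
    calc t ^ a * exp (-(b * t)) ≤ (1 + t ^ k) * exp (-(b * t)) := by
          gcongr; exact rpow_le_one_add_pow ht.le ha hak
      _ = exp (-(b * t)) + t ^ k * exp (-(b * t)) := by ring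
      _ ≤ 1 + k.factorial / b ^ k := by
          gcongr
          · exact exp_le_one_iff.mpr (by nlinarith)
          · exact pow_mul_exp_neg_mul_le hb ht.le k
  calc exp (-(b * t)) = t ^ a * exp (-(b * t)) * t ^ (-a) := by
        rw [rpow_neg ht.le]; field_simp
    _ ≤ (1 + k.factorial / b ^ k) * t ^ (-a) := by gcongr

lemma mul_exp_inv_sub_one_le_exp_two {t : ℝ} (ht : 1 / 2 ≤ t) : t * (exp (1 / t) - 1) ≤ exp 2 := by
  have ht0 : 0 < t := by linarith
  calc t * (exp (1 / t) - 1) ≤ t * (1 / t * exp (1 / t)) := by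
        gcongr; exact exp_sub_one_le_mul_exp _
    _ = exp (1 / t) := by field_simp
    _ ≤ exp 2 := exp_le_exp.mpr (by rw [div_le_iff₀ ht0]; linarith)

lemma qKer_le_of_convPow_le {d : ℕ} {μ : (Fin d → ℤ) → ℝ} {t s : ℝ} {y : Fin d → ℤ} {g : ℕ → ℝ}
    (ht : 0 ≤ t) (hg : HasSum (fun n ↦ poissonWeight t n * g n) s) (hs : 0 ≤ s)
    (h : ∀ n, convPow μ n y ≤ g n) : qKer μ t y ≤ s := by
  show ∑' n, poissonWeight t n * convPow μ n y ≤ s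
  -- if the series diverges, `qKer μ t y` is the junk value `0`
  by_cases hsum : Summable fun n ↦ poissonWeight t n * convPow μ n y
  · exact hasSum_le (fun n ↦ mul_le_mul_of_nonneg_left (h n) (poissonWeight_nonneg ht n))
      hsum.hasSum hg
  · rwa [tsum_eq_zero_of_not_summable hsum]

lemma convPow_zero_le {d : ℕ} (μ : (Fin d → ℤ) → ℝ) (c s : ℝ) (y : Fin d → ℤ) :
    convPow μ 0 y ≤ exp (-c * znorm y / s) := by
  by_cases hy : y = 0
  · simp [convPow, hy, znorm]
  · simpa [convPow, hy] using (exp_pos _).le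

section GaussianBound

variable {d : ℕ} {μ : (Fin d → ℤ) → ℝ} {C₁ C₂ : ℝ}
  (hbound : ∀ n : ℕ, 1 ≤ n → ∀ y : Fin d → ℤ,
    convPow μ n y ≤ C₁ * (n : ℝ) ^ (-(d : ℝ) / 2) * exp (-C₂ * (znorm y) ^ 2 / n))
include hbound

lemma convPow_le_exp_div_mul_exp (hC₁ : 0 ≤ C₁) (hC₂ : 0 ≤ C₂) {n : ℕ} (hn : 1 ≤ n) {t : ℝ}
    (ht : 0 < t) (y : Fin d → ℤ) :
    convPow μ n y ≤ C₁ * (n : ℝ) ^ (-(d : ℝ) / 2) * exp (n / t) *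
      exp (-(2 * √C₂) * znorm y / √t) := by
  have hn0 : (0 : ℝ) < n := by exact_mod_cast hn
  have hamgm := two_mul_sqrt_mul_div_sqrt_le hC₂ hn0 ht (znorm y)
  calc convPow μ n y ≤ C₁ * (n : ℝ) ^ (-(d : ℝ) / 2) * exp (-C₂ * (znorm y) ^ 2 / n) :=
        hbound n hn y
    _ ≤ C₁ * (n : ℝ) ^ (-(d : ℝ) / 2) * exp (n / t + -(2 * √C₂) * znorm y / √t) := by
        gcongr
        linarith [show -C₂ * znorm y ^ 2 / n = -(C₂ * znorm y ^ 2 / n) by ring,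
          show -(2 * √C₂) * znorm y / √t = -(2 * √C₂ * znorm y / √t) by ring]
    _ = _ := by rw [exp_add]; ring

lemma convPow_le_of_le_half (hC₁ : 0 ≤ C₁) (hC₂ : 0 ≤ C₂) {n : ℕ} {t : ℝ} (ht : 0 < t)
    (hn : (n : ℝ) ≤ t / 2) (y : Fin d → ℤ) :
    convPow μ n y ≤ (1 + C₁ * exp (1 / 2)) * exp (-(2 * √C₂) * znorm y / √t) := by
  have hA : 1 ≤ 1 + C₁ * exp (1 / 2) := by linarith [mul_nonneg hC₁ (exp_pos (1 / 2)).le]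
  rcases Nat.eq_zero_or_pos n with rfl | hn1
  · exact (convPow_zero_le μ _ _ y).trans (le_mul_of_one_le_left (exp_pos _).le hA)
  calc convPow μ n y ≤ C₁ * (n : ℝ) ^ (-(d : ℝ) / 2) * exp (n / t) *
        exp (-(2 * √C₂) * znorm y / √t) := convPow_le_exp_div_mul_exp hbound hC₁ hC₂ hn1 ht y
    _ ≤ C₁ * 1 * exp (1 / 2) * exp (-(2 * √C₂) * znorm y / √t) := by
        have hpow : (n : ℝ) ^ (-(d : ℝ) / 2) ≤ 1 :=
          rpow_le_one_of_one_le_of_nonpos (by exact_mod_cast hn1)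
            (by linarith [d.cast_nonneg (α := ℝ)])
        have hexp : exp (n / t) ≤ exp (1 / 2) :=
          exp_le_exp.mpr (by rw [div_le_iff₀ ht]; linarith)
        gcongr
    _ ≤ _ := by gcongr; linarith

lemma convPow_le_of_half_le (hC₁ : 0 ≤ C₁) (hC₂ : 0 ≤ C₂) {n : ℕ} {t : ℝ} (ht : 0 < t)
    (hn : t / 2 ≤ n) (y : Fin d → ℤ) :
    convPow μ n y ≤ C₁ * 2 ^ ((d : ℝ) / 2) * t ^ (-(d : ℝ) / 2) * exp (1 / t) ^ n *
      exp (-(2 * √C₂) * znorm y / √t) := by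
  have hn1 : 1 ≤ n := (Nat.cast_pos (α := ℝ)).mp (by linarith)
  have hpow : (n : ℝ) ^ (-(d : ℝ) / 2) ≤ 2 ^ ((d : ℝ) / 2) * t ^ (-(d : ℝ) / 2) := by
    calc (n : ℝ) ^ (-(d : ℝ) / 2) ≤ (t / 2) ^ (-(d : ℝ) / 2) :=
          rpow_le_rpow_of_nonpos (by positivity) hn (by linarith [d.cast_nonneg (α := ℝ)])
      _ = 2 ^ ((d : ℝ) / 2) * t ^ (-(d : ℝ) / 2) := by
          rw [div_rpow ht.le zero_le_two, neg_div, rpow_neg zero_le_two]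
          field_simp
  calc convPow μ n y ≤ C₁ * (n : ℝ) ^ (-(d : ℝ) / 2) * exp (n / t) *
        exp (-(2 * √C₂) * znorm y / √t) := convPow_le_exp_div_mul_exp hbound hC₁ hC₂ hn1 ht y
    _ ≤ C₁ * (2 ^ ((d : ℝ) / 2) * t ^ (-(d : ℝ) / 2)) * exp (n / t) *
        exp (-(2 * √C₂) * znorm y / √t) := by gcongr
    _ = _ := by rw [← exp_nat_mul, mul_one_div]; ring

lemma convPow_le_poisson_majorant (hC₁ : 0 ≤ C₁) (hC₂ : 0 ≤ C₂) {t : ℝ} (ht : 0 < t) (n : ℕ)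
    (y : Fin d → ℤ) :
    convPow μ n y ≤ ((1 + C₁ * exp (1 / 2)) * exp (t / 2) * exp (-1) ^ n +
      C₁ * 2 ^ ((d : ℝ) / 2) * t ^ (-(d : ℝ) / 2) * exp (1 / t) ^ n) *
      exp (-(2 * √C₂) * znorm y / √t) := by
  have hA : 0 ≤ 1 + C₁ * exp (1 / 2) := by positivity
  rcases le_total (n : ℝ) (t / 2) with hn | hn
  · have hshift : 1 ≤ exp (t / 2) * exp (-1) ^ n := by
      rw [← exp_nat_mul, ← exp_add]; exact one_le_exp (by linarith)
    calc convPow μ n y ≤ (1 + C₁ * exp (1 / 2)) * exp (-(2 * √C₂) * znorm y / √t) :=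
          convPow_le_of_le_half hbound hC₁ hC₂ ht hn y
      _ ≤ (1 + C₁ * exp (1 / 2)) * (exp (t / 2) * exp (-1) ^ n) *
          exp (-(2 * √C₂) * znorm y / √t) := by gcongr; exact le_mul_of_one_le_right hA hshift
      _ ≤ _ := by gcongr; rw [← mul_assoc]; exact le_add_of_nonneg_right (by positivity)
  · calc convPow μ n y ≤ _ := convPow_le_of_half_le hbound hC₁ hC₂ ht hn y
      _ ≤ _ := by gcongr; exact le_add_of_nonneg_left (by positivity)

end GaussianBound

theorem stmt0_general (d : ℕ) (μ : (Fin d → ℤ) → ℝ)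
    (C₁ C₂ : ℝ) (hC₁ : 0 < C₁) (hC₂ : 0 < C₂)
    (hbound : ∀ n : ℕ, 1 ≤ n → ∀ y : Fin d → ℤ,
      convPow μ n y ≤ C₁ * (n : ℝ) ^ (-(d : ℝ) / 2) * Real.exp (-C₂ * (znorm y) ^ 2 / n)) :
    ∃ κ₁ > 0, ∃ κ₂ > 0, ∀ t : ℝ, 1 / 2 ≤ t → ∀ y : Fin d → ℤ,
      qKer μ t y ≤ κ₁ * t ^ (-(d : ℝ) / 2) * Real.exp (-κ₂ * znorm y / Real.sqrt t) := by
  set A := 1 + C₁ * exp (1 / 2)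
  set B := C₁ * 2 ^ ((d : ℝ) / 2)
  have hb : 0 < 1 / 2 - exp (-1) := by
    have : exp (-1) < 1 / 2 := by
      rw [exp_neg, inv_lt_comm₀ (exp_pos 1) one_half_pos]; linarith [exp_one_gt_d9]
    linarith
  set b := 1 / 2 - exp (-1) with hb_def
  set K := 1 + d.factorial / b ^ d
  refine ⟨A * K + B * exp (exp 2), by positivity, 2 * √C₂, by positivity, fun t ht y ↦ ?_⟩
  have ht0 : 0 < t := by linarith
  set T := t ^ (-(d : ℝ) / 2)
  set E := exp (-(2 * √C₂) * znorm y / √t)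
  have hsum : HasSum (fun n ↦ poissonWeight t n * ((A * exp (t / 2) * exp (-1) ^ n +
      B * T * exp (1 / t) ^ n) * E))
      ((A * exp (-(b * t)) + B * T * exp (t * (exp (1 / t) - 1))) * E) := by
    have := (((hasSum_poissonWeight_mul_pow t (exp (-1))).mul_left (A * exp (t / 2))).add
      ((hasSum_poissonWeight_mul_pow t (exp (1 / t))).mul_left (B * T))).mul_right E
    have hlow : exp (t / 2) * exp (t * (exp (-1) - 1)) = exp (-(b * t)) := by
      rw [← exp_add, hb_def]; ring_nf
    rw [mul_assoc A, hlow] at this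
    exact this.congr_fun fun n ↦ by ring
  calc qKer μ t y ≤ (A * exp (-(b * t)) + B * T * exp (t * (exp (1 / t) - 1))) * E :=
        qKer_le_of_convPow_le ht0.le hsum (by positivity)
          (convPow_le_poisson_majorant hbound hC₁.le hC₂.le ht0 · y)
    _ ≤ (A * (K * T) + B * T * exp (exp 2)) * E := by
        gcongr
        · have := exp_neg_mul_le_mul_rpow_neg (a := d / 2) (k := d) hb ht0 (by positivity)
            (by linarith [d.cast_nonneg (α := ℝ)])
          rwa [← neg_div] at this
        · exact mul_exp_inv_sub_one_le_exp_two ht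
    _ = (A * K + B * exp (exp 2)) * T * E := by ring

theorem stmt0 (d : ℕ) (hd : 1 ≤ d) (μ : (Fin d → ℤ) → ℝ)
    (hμ0 : ∀ y, 0 ≤ μ y) (hμ1 : ∑' y : Fin d → ℤ, μ y = 1)
    (C₁ C₂ : ℝ) (hC₁ : 0 < C₁) (hC₂ : 0 < C₂)
    (hbound : ∀ n : ℕ, 1 ≤ n → ∀ y : Fin d → ℤ,
      convPow μ n y ≤ C₁ * (n : ℝ) ^ (-(d : ℝ) / 2) * Real.exp (-C₂ * (znorm y) ^ 2 / n)) :
    ∃ κ₁ > 0, ∃ κ₂ > 0, ∀ t : ℝ, 1 / 2 ≤ t → ∀ y : Fin d → ℤ,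
      qKer μ t y ≤ κ₁ * t ^ (-(d : ℝ) / 2) * Real.exp (-κ₂ * znorm y / Real.sqrt t) :=
  stmt0_general d μ C₁ C₂ hC₁ hC₂ hbound
end

section
/- For every integer d ≥ 1 and every constant C₂ > 0 there exist constants C₆, C₇ > 0 such that for all t > 0 and all r ≥ 0: Σ_{n ∈ ℕ, n > 2t} e^{-t} (t^n/n!) n^{-d/2} exp(−C₂ r²/n) ≤ C₇ t^{-d/2} exp(−C₆ r). -/
theorem stmt3 (d : ℕ) (hd : 1 ≤ d) (C₂ : ℝ) (hC₂ : 0 < C₂) :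
    ∃ C₆ > 0, ∃ C₇ > 0, ∀ t : ℝ, 0 < t → ∀ r : ℝ, 0 ≤ r →
      (∑' n : ℕ, if 2 * t < (n : ℝ) then
          Real.exp (-t) * t ^ n / (Nat.factorial n) * (n : ℝ) ^ (-(d : ℝ) / 2) *
            Real.exp (-C₂ * r ^ 2 / n) else 0)
        ≤ C₇ * t ^ (-(d : ℝ) / 2) * Real.exp (-C₆ * r) := by
  set c : ℝ := Real.log 2 - 2⁻¹ with hc_def
  clear_value c
  have hc : 0 < c := by
    have h1 : Real.exp 2⁻¹ * Real.exp 2⁻¹ = Real.exp 1 := by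
      rw [← Real.exp_add]; norm_num
    have h2 : Real.exp 1 < 4 := by
      have := Real.exp_one_lt_d9; linarith
    have hexp_half : Real.exp 2⁻¹ < 2 := by
      nlinarith [Real.exp_pos (2⁻¹ : ℝ)]
    have : (2⁻¹ : ℝ) < Real.log 2 := by
      rw [Real.lt_log_iff_exp_lt (by norm_num)]; exact hexp_half
    simp only [hc_def]; linarith
  set q : ℝ := Real.exp (-(c / 2)) with hq_def
  clear_value q
  have hq0 : 0 ≤ q := hq_def ▸ (Real.exp_pos _).le
  have hq1 : q < 1 := by
    rw [hq_def, Real.exp_lt_one_iff]; linarith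
  set C₆ : ℝ := Real.sqrt (2 * c * C₂) with hC₆_def
  clear_value C₆
  have hC₆pos : 0 < C₆ := hC₆_def ▸ Real.sqrt_pos.mpr (by positivity)
  refine ⟨C₆, hC₆pos, (1 - q)⁻¹, inv_pos.mpr (by linarith), ?_⟩
  intro t ht r hr
  set A : ℝ := t ^ (-(d : ℝ) / 2) * Real.exp (-C₆ * r) with hA_def
  clear_value A
  have hA0 : 0 ≤ A := by rw [hA_def]; positivity
  -- AM-GM type fact
  have hAMGM : ∀ n : ℕ, 0 < (n : ℝ) → C₆ * r ≤ c / 2 * n + C₂ * r ^ 2 / n := by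
    intro n hn
    have ha : Real.sqrt (c / 2) ^ 2 = c / 2 := Real.sq_sqrt (by positivity)
    have hb : Real.sqrt C₂ ^ 2 = C₂ := Real.sq_sqrt hC₂.le
    have hs : C₆ = 2 * Real.sqrt (c / 2) * Real.sqrt C₂ := by
      rw [hC₆_def,
        show 2 * c * C₂ = (2 * Real.sqrt (c / 2) * Real.sqrt C₂) ^ 2 by nlinarith]
      exact Real.sqrt_sq (by positivity)
    have h1 : C₂ * r ^ 2 / n = C₂ * r ^ 2 * ((n : ℝ))⁻¹ := by ring
    have h2 : (0 : ℝ) < ((n : ℝ))⁻¹ := by positivity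
    have key : C₆ * r * n ≤ c / 2 * n ^ 2 + C₂ * r ^ 2 := by
      calc C₆ * r * n = 2 * Real.sqrt (c / 2) * Real.sqrt C₂ * n * r := by rw [hs]; ring
        _ ≤ Real.sqrt (c / 2) ^ 2 * n ^ 2 + Real.sqrt C₂ ^ 2 * r ^ 2 := by
            nlinarith [sq_nonneg (Real.sqrt (c / 2) * n - Real.sqrt C₂ * r)]
        _ = c / 2 * n ^ 2 + C₂ * r ^ 2 := by rw [ha, hb]
    have h3 : c / 2 * n + C₂ * r ^ 2 / n = (c / 2 * n ^ 2 + C₂ * r ^ 2) / n := by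
      field_simp
    rw [h3, le_div_iff₀ hn]
    linarith [key]
  -- termwise bound
  have hterm : ∀ n : ℕ,
      (if 2 * t < (n : ℝ) then
          Real.exp (-t) * t ^ n / (Nat.factorial n) * (n : ℝ) ^ (-(d : ℝ) / 2) *
            Real.exp (-C₂ * r ^ 2 / n) else 0) ≤ A * q ^ n := by
    intro n
    split_ifs with hn
    · have hn0 : 0 < (n : ℝ) := lt_trans (by positivity) hn
      have hfac : (0 : ℝ) < (Nat.factorial n : ℝ) := by
        exact_mod_cast Nat.factorial_pos n
      -- E1 bound
      have hE1 : Real.exp (-t) * t ^ n / (Nat.factorial n) ≤ Real.exp (-(c * n)) := by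
        have hpe := Real.pow_div_factorial_le_exp (2 * t) (by positivity) n
        rw [div_le_iff₀ hfac] at hpe
        have h1 : t ^ n / (Nat.factorial n) ≤ Real.exp (2 * t) / 2 ^ n := by
          rw [div_le_div_iff₀ hfac (by positivity)]
          calc t ^ n * 2 ^ n = (2 * t) ^ n := by rw [mul_pow]; ring
            _ ≤ Real.exp (2 * t) * (Nat.factorial n) := hpe
        have h2 : Real.exp (-t) * t ^ n / (Nat.factorial n)
            ≤ Real.exp (-t) * (Real.exp (2 * t) / 2 ^ n) := by
          rw [mul_div_assoc]
          exact mul_le_mul_of_nonneg_left h1 (Real.exp_pos _).le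
        have h2pow : (2 : ℝ) ^ n = Real.exp ((n : ℝ) * Real.log 2) := by
          rw [Real.exp_nat_mul, Real.exp_log (by norm_num : (0:ℝ) < 2)]
        have h3 : Real.exp (-t) * (Real.exp (2 * t) / 2 ^ n)
            = Real.exp (-t + (2 * t - (n : ℝ) * Real.log 2)) := by
          rw [h2pow, ← Real.exp_sub, ← Real.exp_add]
        refine h2.trans ?_
        rw [h3, Real.exp_le_exp, hc_def]
        have h4 : 2 * t < (n : ℝ) := hn
        nlinarith
      -- E2 bound
      have hE2 : (n : ℝ) ^ (-(d : ℝ) / 2) ≤ t ^ (-(d : ℝ) / 2) := by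
        apply Real.rpow_le_rpow_of_nonpos ht (by linarith)
        have : (0 : ℝ) ≤ (d : ℝ) := Nat.cast_nonneg d
        linarith
      -- E3 bound with half of E1's budget
      have hE3 : Real.exp (-(c * n)) * Real.exp (-C₂ * r ^ 2 / n)
          ≤ q ^ n * Real.exp (-C₆ * r) := by
        have hqn : q ^ n = Real.exp (-(c / 2) * n) := by
          rw [hq_def, ← Real.exp_nat_mul]; ring_nf
        rw [hqn, ← Real.exp_add, ← Real.exp_add, Real.exp_le_exp]
        have := hAMGM n hn0
        have hdiv : -C₂ * r ^ 2 / n = -(C₂ * r ^ 2 / n) := by ring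
        rw [hdiv]
        linarith
      calc Real.exp (-t) * t ^ n / (Nat.factorial n) * (n : ℝ) ^ (-(d : ℝ) / 2) *
            Real.exp (-C₂ * r ^ 2 / n)
          ≤ Real.exp (-(c * n)) * t ^ (-(d : ℝ) / 2) * Real.exp (-C₂ * r ^ 2 / n) := by
            refine mul_le_mul_of_nonneg_right ?_ (Real.exp_pos _).le
            exact mul_le_mul hE1 hE2 (Real.rpow_nonneg hn0.le _) (Real.exp_pos _).le
        _ = t ^ (-(d : ℝ) / 2) * (Real.exp (-(c * n)) * Real.exp (-C₂ * r ^ 2 / n)) := by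
            ring
        _ ≤ t ^ (-(d : ℝ) / 2) * (q ^ n * Real.exp (-C₆ * r)) :=
            mul_le_mul_of_nonneg_left hE3 (by positivity)
        _ = A * q ^ n := by rw [hA_def]; ring
    · positivity
  have hg : Summable (fun n : ℕ => A * q ^ n) :=
    (summable_geometric_of_lt_one hq0 hq1).mul_left A
  have hnonneg : ∀ n : ℕ,
      0 ≤ (if 2 * t < (n : ℝ) then
          Real.exp (-t) * t ^ n / (Nat.factorial n) * (n : ℝ) ^ (-(d : ℝ) / 2) *
            Real.exp (-C₂ * r ^ 2 / n) else 0) := by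
    intro n; split_ifs <;> positivity
  have hf : Summable (fun n : ℕ =>
      (if 2 * t < (n : ℝ) then
          Real.exp (-t) * t ^ n / (Nat.factorial n) * (n : ℝ) ^ (-(d : ℝ) / 2) *
            Real.exp (-C₂ * r ^ 2 / n) else 0)) :=
    Summable.of_nonneg_of_le hnonneg hterm hg
  calc (∑' n : ℕ, if 2 * t < (n : ℝ) then
          Real.exp (-t) * t ^ n / (Nat.factorial n) * (n : ℝ) ^ (-(d : ℝ) / 2) *
            Real.exp (-C₂ * r ^ 2 / n) else 0)
      ≤ ∑' n : ℕ, A * q ^ n := Summable.tsum_le_tsum hterm hf hg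
    _ = A * (1 - q)⁻¹ := by
        rw [tsum_mul_left, tsum_geometric_of_lt_one hq0 hq1]
    _ = (1 - q)⁻¹ * t ^ (-(d : ℝ) / 2) * Real.exp (-C₆ * r) := by
        rw [hA_def]; ring
end

section
/- Let d ≥ 2, let κ₁, κ₂ > 0 and T > 0. There exists a constant L₀ > 0, depending only on d, T, κ₁, κ₂, such that for every r > 0: ∫_0^T κ₁ t^{-d/2} exp(−κ₂ r/√t) dt ≤ L₀ ψ_d(1/r). -/
open MeasureTheory intervalIntegral

/-- `ψ_2(r) = 2 ln(max(r,e))`, and `ψ_d(r) = r^{d-2}` for `d ≥ 3`. -/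
noncomputable def psiD (d : ℕ) (r : ℝ) : ℝ :=
  if d = 2 then 2 * Real.log (max r (Real.exp 1)) else r ^ ((d : ℝ) - 2)

private lemma exp_neg_le_fact_div (k : ℕ) {x : ℝ} (hx : 0 < x) :
    Real.exp (-x) ≤ (Nat.factorial k : ℝ) / x ^ k := by
  have h1 : x ^ k / (Nat.factorial k : ℝ) ≤ Real.exp x :=
    Real.pow_div_factorial_le_exp (x := x) hx.le k
  have hk : (0:ℝ) < (Nat.factorial k : ℝ) := by positivity
  have hxk : (0:ℝ) < x ^ k := by positivity
  have h2 : Real.exp (-x) * (x ^ k / (Nat.factorial k : ℝ)) ≤ 1 := by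
    have h := mul_le_mul_of_nonneg_left h1 (Real.exp_pos (-x)).le
    rwa [← Real.exp_add, neg_add_cancel, Real.exp_zero] at h
  rw [le_div_iff₀ hxk]
  have h3 := mul_le_mul_of_nonneg_right h2 hk.le
  rw [one_mul] at h3
  have h4 : Real.exp (-x) * (x ^ k / (Nat.factorial k : ℝ)) * (Nat.factorial k : ℝ)
      = Real.exp (-x) * x ^ k := by field_simp
  linarith [h4 ▸ h3]

theorem stmt4 (d : ℕ) (hd : 2 ≤ d) (κ₁ κ₂ T : ℝ)
    (hκ₁ : 0 < κ₁) (hκ₂ : 0 < κ₂) (hT : 0 < T) :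
    ∃ L₀ > 0, ∀ r : ℝ, 0 < r →
      (∫ t in (0:ℝ)..T, κ₁ * t ^ (-(d : ℝ) / 2) * Real.exp (-κ₂ * r / Real.sqrt t))
        ≤ L₀ * psiD d (1 / r) := by
  set k : ℕ := d - 1 with hk
  have hk1 : 1 ≤ k := by omega
  have hkd : (k : ℝ) = (d : ℝ) - 1 := by
    rw [hk]; push_cast [Nat.cast_sub (by omega : 1 ≤ d)]; ring
  set C₁ : ℝ := κ₁ * (Nat.factorial k : ℝ) / κ₂ ^ k with hC₁
  have hC₁pos : 0 < C₁ := by positivity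
  have hd2ne : -(d:ℝ)/2 ≠ 0 := by
    have : (2:ℝ) ≤ (d:ℝ) := by exact_mod_cast hd
    intro h; rw [div_eq_zero_iff] at h
    rcases h with h | h <;> linarith
  -- pointwise bound valid on all of [0, ∞)
  have hbound : ∀ r : ℝ, 0 < r → ∀ t : ℝ, 0 ≤ t →
      κ₁ * t ^ (-(d : ℝ) / 2) * Real.exp (-κ₂ * r / Real.sqrt t)
        ≤ C₁ * (r ^ k)⁻¹ * t ^ (-(1:ℝ)/2) := by
    intro r hr t ht
    rcases ht.eq_or_lt with h0 | ht
    · rw [← h0, Real.zero_rpow hd2ne, Real.zero_rpow (by norm_num : -(1:ℝ)/2 ≠ 0)]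
      simp
    · have hst : 0 < Real.sqrt t := Real.sqrt_pos.mpr ht
      have hx : 0 < κ₂ * r / Real.sqrt t := by positivity
      have harg : -κ₂ * r / Real.sqrt t = -(κ₂ * r / Real.sqrt t) := by ring
      have hexp := exp_neg_le_fact_div k hx
      have hkey : t ^ (-(d:ℝ)/2) * (Real.sqrt t) ^ k = t ^ (-(1:ℝ)/2) := by
        rw [Real.sqrt_eq_rpow, ← Real.rpow_natCast (t ^ (1/(2:ℝ))) k,
          ← Real.rpow_mul ht.le, ← Real.rpow_add ht]
        congr 1
        rw [hkd]; ring
      have hpos : 0 ≤ κ₁ * t ^ (-(d:ℝ)/2) := by positivity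
      calc κ₁ * t ^ (-(d : ℝ) / 2) * Real.exp (-κ₂ * r / Real.sqrt t)
          ≤ κ₁ * t ^ (-(d : ℝ) / 2) * ((Nat.factorial k : ℝ) / (κ₂ * r / Real.sqrt t) ^ k) := by
            rw [harg]; exact mul_le_mul_of_nonneg_left hexp hpos
        _ = C₁ * (r ^ k)⁻¹ * t ^ (-(1:ℝ)/2) := by
            rw [← hkey, hC₁, div_pow, mul_pow]
            field_simp
  have hnonneg : ∀ r t : ℝ, 0 ≤ t → 0 ≤ κ₁ * t ^ (-(d : ℝ) / 2) * Real.exp (-κ₂ * r / Real.sqrt t) := by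
    intro r t ht
    have h1 : 0 ≤ t ^ (-(d:ℝ)/2) := Real.rpow_nonneg ht _
    positivity
  -- continuity / integrability of the integrand
  have hcont : ∀ r : ℝ, ContinuousOn
      (fun t : ℝ => κ₁ * t ^ (-(d : ℝ) / 2) * Real.exp (-κ₂ * r / Real.sqrt t))
      (Set.Ioi (0:ℝ)) := by
    intro r t ht
    have ht' : (0:ℝ) < t := ht
    apply ContinuousAt.continuousWithinAt
    have h1 : ContinuousAt (fun t : ℝ => t ^ (-(d:ℝ)/2)) t :=
      Real.continuousAt_rpow_const t _ (Or.inl ht'.ne')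
    have h2 : ContinuousAt (fun t : ℝ => Real.exp (-κ₂ * r / Real.sqrt t)) t := by
      apply Real.continuous_exp.continuousAt.comp
      exact ContinuousAt.div continuousAt_const Real.continuous_sqrt.continuousAt
        (Real.sqrt_pos.mpr ht').ne'
    exact (continuousAt_const.mul h1).mul h2
  have hint : ∀ r : ℝ, 0 < r → ∀ a b : ℝ, 0 ≤ a → a ≤ b →
      IntervalIntegrable
        (fun t : ℝ => κ₁ * t ^ (-(d : ℝ) / 2) * Real.exp (-κ₂ * r / Real.sqrt t))
        volume a b := by
    intro r hr a b ha hab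
    have hg : IntervalIntegrable (fun t : ℝ => C₁ * (r ^ k)⁻¹ * t ^ (-(1:ℝ)/2)) volume a b :=
      (intervalIntegrable_rpow' (by norm_num)).const_mul _
    apply hg.mono_fun'
    · refine ContinuousOn.aestronglyMeasurable ((hcont r).mono ?_) measurableSet_uIoc
      rw [Set.uIoc_of_le hab]
      exact fun t htm => lt_of_le_of_lt ha htm.1
    · filter_upwards [ae_restrict_mem measurableSet_uIoc] with t htm
      rw [Set.uIoc_of_le hab] at htm
      have ht : 0 ≤ t := ha.trans htm.1.le
      rw [Real.norm_eq_abs, abs_of_nonneg (hnonneg r t ht)]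
      exact hbound r hr t ht
  -- integral of the dominating function on `[0, c]`
  have hI1 : ∀ r : ℝ, 0 < r → ∀ c : ℝ, 0 ≤ c → c ≤ r ^ 2 →
      (∫ t in (0:ℝ)..c, C₁ * (r ^ k)⁻¹ * t ^ (-(1:ℝ)/2)) ≤ 2 * C₁ * (r ^ (d-2))⁻¹ := by
    intro r hr c hc hcr
    rw [intervalIntegral.integral_const_mul, integral_rpow (Or.inl (by norm_num))]
    have h0 : ((0:ℝ)) ^ (-(1:ℝ)/2 + 1) = 0 := Real.zero_rpow (by norm_num)
    rw [h0]
    have hcs : c ^ (-(1:ℝ)/2 + 1) = Real.sqrt c := by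
      rw [Real.sqrt_eq_rpow]; norm_num
    rw [hcs]
    have hsc : Real.sqrt c ≤ r := by
      calc Real.sqrt c ≤ Real.sqrt (r ^ 2) := Real.sqrt_le_sqrt hcr
        _ = r := Real.sqrt_sq hr.le
    have hrk : (r ^ k)⁻¹ * r ≤ (r ^ (d-2))⁻¹ := by
      have : r ^ k = r ^ (d - 2) * r := by
        rw [← pow_succ]; congr 1; omega
      rw [this, mul_inv, mul_assoc, inv_mul_cancel₀ hr.ne']
      simp
    have hnn : 0 ≤ (r ^ k)⁻¹ := by positivity
    calc C₁ * (r ^ k)⁻¹ * ((Real.sqrt c - 0) / (-(1:ℝ)/2 + 1))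
        = 2 * C₁ * ((r ^ k)⁻¹ * Real.sqrt c) := by ring
      _ ≤ 2 * C₁ * ((r ^ k)⁻¹ * r) := by
          apply mul_le_mul_of_nonneg_left (mul_le_mul_of_nonneg_left hsc hnn) (by positivity)
      _ ≤ 2 * C₁ * (r ^ (d-2))⁻¹ := mul_le_mul_of_nonneg_left hrk (by positivity)
  -- bound of f by κ₁ t^{-d/2} (exp ≤ 1)
  have hbound2 : ∀ r t : ℝ, 0 < r → 0 ≤ t →
      κ₁ * t ^ (-(d : ℝ) / 2) * Real.exp (-κ₂ * r / Real.sqrt t)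
        ≤ κ₁ * t ^ (-(d : ℝ) / 2) := by
    intro r t hr ht
    have harg : -κ₂ * r / Real.sqrt t = -(κ₂ * r / Real.sqrt t) := by ring
    have h1 : Real.exp (-κ₂ * r / Real.sqrt t) ≤ 1 := by
      rw [Real.exp_le_one_iff, harg]
      have : 0 ≤ κ₂ * r / Real.sqrt t := by positivity
      linarith
    have h2 : 0 ≤ κ₁ * t ^ (-(d:ℝ)/2) := by
      have := Real.rpow_nonneg ht (-(d:ℝ)/2); positivity
    nlinarith [h1, h2]
  -- bound for the integral over [0,c], c ≤ min T r²
  have hmain1 : ∀ r : ℝ, 0 < r → ∀ c : ℝ, 0 ≤ c → c ≤ r ^ 2 →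
      (∫ t in (0:ℝ)..c, κ₁ * t ^ (-(d : ℝ) / 2) * Real.exp (-κ₂ * r / Real.sqrt t))
        ≤ 2 * C₁ * (r ^ (d-2))⁻¹ := by
    intro r hr c hc hcr
    calc (∫ t in (0:ℝ)..c, κ₁ * t ^ (-(d : ℝ) / 2) * Real.exp (-κ₂ * r / Real.sqrt t))
        ≤ ∫ t in (0:ℝ)..c, C₁ * (r ^ k)⁻¹ * t ^ (-(1:ℝ)/2) := by
          apply intervalIntegral.integral_mono_on hc (hint r hr 0 c le_rfl hc)
            ((intervalIntegrable_rpow' (by norm_num)).const_mul _)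
          exact fun t htm => hbound r hr t htm.1
      _ ≤ 2 * C₁ * (r ^ (d-2))⁻¹ := hI1 r hr c hc hcr
  -- splitting the integral when r² < T
  have hzero_notmem : ∀ r : ℝ, 0 < r → (0:ℝ) ∉ Set.uIcc (r^2) T :=
    fun r hr => Set.notMem_uIcc_of_lt (by positivity) hT
  have hg2int : ∀ r : ℝ, 0 < r → IntervalIntegrable
      (fun t : ℝ => κ₁ * t ^ (-(d:ℝ)/2)) volume (r^2) T :=
    fun r hr => (intervalIntegrable_rpow (Or.inr (hzero_notmem r hr))).const_mul _
  have hsplit : ∀ r : ℝ, 0 < r → r ^ 2 ≤ T →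
      (∫ t in (0:ℝ)..T, κ₁ * t ^ (-(d : ℝ) / 2) * Real.exp (-κ₂ * r / Real.sqrt t))
        ≤ 2 * C₁ * (r ^ (d-2))⁻¹ + ∫ t in (r^2)..T, κ₁ * t ^ (-(d:ℝ)/2) := by
    intro r hr hrT
    have hr2 : (0:ℝ) ≤ r^2 := by positivity
    rw [← intervalIntegral.integral_add_adjacent_intervals
      (hint r hr 0 (r^2) le_rfl hr2) (hint r hr (r^2) T hr2 hrT)]
    have h2 : (∫ t in (r^2)..T, κ₁ * t ^ (-(d : ℝ) / 2) * Real.exp (-κ₂ * r / Real.sqrt t))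
        ≤ ∫ t in (r^2)..T, κ₁ * t ^ (-(d:ℝ)/2) := by
      apply intervalIntegral.integral_mono_on hrT (hint r hr (r^2) T hr2 hrT) (hg2int r hr)
      exact fun t htm => hbound2 r t hr (hr2.trans htm.1)
    have h1 := hmain1 r hr (r^2) hr2 le_rfl
    linarith
  by_cases hd2 : d = 2
  · -- dimension 2
    subst hd2
    refine ⟨C₁ + κ₁ * max (Real.log T) 0 / 2 + κ₁, by positivity, fun r hr => ?_⟩
    have hM : (1:ℝ) ≤ Real.log (max (1/r) (Real.exp 1)) := by
      calc (1:ℝ) = Real.log (Real.exp 1) := (Real.log_exp 1).symm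
        _ ≤ _ := Real.log_le_log (Real.exp_pos 1) (le_max_right _ _)
    have hpsi : psiD 2 (1/r) = 2 * Real.log (max (1/r) (Real.exp 1)) := by
      simp [psiD]
    rw [hpsi]
    have hrd2 : (r ^ ((2:ℕ)-2))⁻¹ = 1 := by norm_num
    set M := Real.log (max (1/r) (Real.exp 1)) with hM'
    have hmax : (0:ℝ) ≤ max (Real.log T) 0 := le_max_right _ _
    have e1 : 2*C₁ ≤ 2*C₁*M := by nlinarith
    have e2 : 0 ≤ κ₁ * max (Real.log T) 0 * M :=
      mul_nonneg (mul_nonneg hκ₁.le hmax) (by linarith)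
    have e3 : 0 ≤ κ₁ * M := mul_nonneg hκ₁.le (by linarith)
    have e4 : κ₁ * max (Real.log T) 0 ≤ κ₁ * max (Real.log T) 0 * M := by
      nlinarith [mul_nonneg (mul_nonneg hκ₁.le hmax) (sub_nonneg.2 hM)]
    have hexpand : (C₁ + κ₁ * max (Real.log T) 0 / 2 + κ₁) * (2*M)
        = 2*C₁*M + κ₁ * max (Real.log T) 0 * M + 2*(κ₁*M) := by ring
    rcases le_or_gt T (r^2) with hTr | hTr
    · have h0 := hmain1 r hr T hT.le hTr
      rw [hrd2, mul_one] at h0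
      linarith
    · have hs := hsplit r hr hTr.le
      rw [hrd2, mul_one] at hs
      have hI2 : (∫ t in (r^2)..T, κ₁ * t ^ (-((2:ℕ):ℝ)/2))
          ≤ κ₁ * (max (Real.log T) 0 + 2 * M) := by
        have hexp : ∀ t : ℝ, κ₁ * t ^ (-((2:ℕ):ℝ)/2) = κ₁ * t⁻¹ := by
          intro t
          have h1 : -((2:ℕ):ℝ)/2 = -1 := by norm_num
          rw [h1, Real.rpow_neg_one]
        simp_rw [hexp]
        rw [intervalIntegral.integral_const_mul, integral_inv (hzero_notmem r hr)]
        have hlog : Real.log (T / r^2) = Real.log T - 2 * Real.log r := by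
          rw [Real.log_div hT.ne' (by positivity), Real.log_pow]
          push_cast; ring
        have h1 : Real.log (1/r) ≤ M := by
          rw [hM']
          exact Real.log_le_log (by positivity) (le_max_left _ _)
        have h2 : Real.log (1/r) = -Real.log r := by
          rw [one_div, Real.log_inv]
        have h3 : Real.log T ≤ max (Real.log T) 0 := le_max_left _ _
        have h4 : Real.log (T / r^2) ≤ max (Real.log T) 0 + 2 * M := by
          rw [hlog]; linarith
        exact mul_le_mul_of_nonneg_left h4 hκ₁.le
      linarith
  · -- dimension ≥ 3
    have hd3 : 3 ≤ d := by omega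
    have hdR : (3:ℝ) ≤ (d:ℝ) := by exact_mod_cast hd3
    set ed : ℝ := (d:ℝ)/2 - 1 with hed
    have hedpos : 0 < ed := by rw [hed]; linarith
    refine ⟨2 * C₁ + κ₁ / ed, by positivity, fun r hr => ?_⟩
    have hpsi : psiD d (1/r) = (r ^ (d-2))⁻¹ := by
      rw [psiD, if_neg hd2]
      have hcast : (d:ℝ) - 2 = ((d - 2 : ℕ) : ℝ) := by
        push_cast [Nat.cast_sub hd]; ring
      rw [hcast, Real.rpow_natCast, one_div, inv_pow]
    rw [hpsi]
    have hrdnn : (0:ℝ) ≤ (r ^ (d-2))⁻¹ := by positivity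
    have hexpand : (2 * C₁ + κ₁ / ed) * (r ^ (d-2))⁻¹
        = 2 * C₁ * (r ^ (d-2))⁻¹ + κ₁ / ed * (r ^ (d-2))⁻¹ := by ring
    have h2nn : 0 ≤ κ₁ / ed * (r ^ (d-2))⁻¹ := by positivity
    rcases le_or_gt T (r^2) with hTr | hTr
    · have h0 := hmain1 r hr T hT.le hTr
      linarith
    · have hs := hsplit r hr hTr.le
      have hI2 : (∫ t in (r^2)..T, κ₁ * t ^ (-(d:ℝ)/2))
          ≤ κ₁ / ed * (r ^ (d-2))⁻¹ := by
        have hne : -(d:ℝ)/2 ≠ -1 := by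
          intro h
          apply hd2
          have h2 : (d:ℝ) = 2 := by linarith
          exact_mod_cast h2
        rw [intervalIntegral.integral_const_mul, integral_rpow (Or.inr ⟨hne, hzero_notmem r hr⟩)]
        have he1 : -(d:ℝ)/2 + 1 = -ed := by rw [hed]; ring
        rw [he1]
        have hr2eq : ((r^2 : ℝ)) ^ (-ed) = (r ^ (d-2))⁻¹ := by
          rw [← Real.rpow_natCast r 2, ← Real.rpow_mul hr.le,
            ← Real.rpow_natCast r (d-2), ← Real.rpow_neg hr.le]
          congr 1
          push_cast [Nat.cast_sub hd]
          rw [hed]; ring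
        rw [hr2eq]
        set X := (r ^ (d-2))⁻¹ with hX
        have hTnn : 0 ≤ T ^ (-ed) := Real.rpow_nonneg hT.le _
        have hgen : ∀ a b c e : ℝ, e ≠ 0 → a * ((b - c) / (-e)) = a/e * (c - b) := by
          intro a b c e he
          field_simp
          ring
        have hid := hgen κ₁ (T ^ (-ed)) X ed hedpos.ne'
        rw [hid]
        have h5 := mul_le_mul_of_nonneg_left (show X - T ^ (-ed) ≤ X by linarith)
          (by positivity : (0:ℝ) ≤ κ₁/ed)
        linarith
      linarith
end

section
/- Let d ≥ 2, T > 0, and let κ₁, κ₂, κ₃, κ₄ > 0 with κ₄ ≥ 4κ₂. Let q : (0,∞) × ℤ^d → [0,1] be any family satisfying q_t(y) ≤ κ₁ t^{-d/2} exp(−κ₂|y|/√t) for all t ≥ 1/2 and all y ∈ ℤ^d, and q_t(y) ≤ κ₃ exp(−κ₄|y|) for all 0 < t ≤ 1 and all y ∈ ℤ^d. Then there exist constants L₂, L₂' > 0, depending only on d, T and the constants κ₁, κ₂, κ₃, κ₄, such that for every c ≥ 1: (i) ∫_0^T q_{c²s}(0) ds ≤ L₂ c^{-d} ψ_d(c);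 (ii) ∫_0^T q_{c²s}(y) ds ≤ L₂ c^{-d} ψ_d(c/|y|) for every y ∈ ℤ^d with y ≠ 0; (iii) ∫_0^T q_{c²s}(y) ds ≤ L₂ c^{-d} exp(−L₂'|y|/c) for every y ∈ ℤ^d with |y| > c. -/
open MeasureTheory intervalIntegral

lemma znorm_nonneg {d : ℕ} (y : Fin d → ℤ) : 0 ≤ znorm y := Real.sqrt_nonneg _

lemma znorm_zero {d : ℕ} : znorm (0 : Fin d → ℤ) = 0 := by
  simp [znorm]

lemma one_le_znorm {d : ℕ} {y : Fin d → ℤ} (hy : y ≠ 0) : 1 ≤ znorm y := by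
  obtain ⟨i, hi⟩ : ∃ i, y i ≠ 0 := by
    by_contra h
    push_neg at h
    exact hy (funext h)
  have h1 : (1 : ℝ) ≤ ((y i : ℝ)) ^ 2 := by
    have : (1 : ℤ) ≤ (y i) ^ 2 := by
      rcases lt_or_gt_of_ne hi with h | h <;> nlinarith
    exact_mod_cast by exact_mod_cast (by push_cast; exact_mod_cast this : (1:ℝ) ≤ ((y i)^2 : ℤ))
  have hsum : (1 : ℝ) ≤ ∑ j, ((y j : ℝ)) ^ 2 := by
    refine le_trans h1 (Finset.single_le_sum (f := fun j => ((y j : ℝ))^2) (fun j _ => sq_nonneg _) (Finset.mem_univ i))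
  calc (1:ℝ) = Real.sqrt 1 := by simp
    _ ≤ znorm y := Real.sqrt_le_sqrt hsum

lemma exp_pow_bound (n : ℕ) {x : ℝ} (hx : 0 < x) : Real.exp (-x) ≤ n.factorial / x ^ n := by
  have h1 : x ^ n / n.factorial ≤ Real.exp x := by
    calc x ^ n / n.factorial ≤ ∑ i ∈ Finset.range (n+1), x ^ i / i.factorial := by
          exact Finset.single_le_sum (f := fun i => x ^ i / (i.factorial : ℝ))
            (fun i _ => by positivity) (Finset.self_mem_range_succ n)
      _ ≤ Real.exp x := Real.sum_le_exp_of_nonneg hx.le _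
  rw [Real.exp_neg]
  rw [inv_le_comm₀ (Real.exp_pos x) (by positivity), inv_div,
    div_le_iff₀ (by positivity : (0:ℝ) < (n.factorial:ℝ))]
  rw [div_le_iff₀ (by positivity : (0:ℝ) < (n.factorial:ℝ))] at h1
  linarith

lemma psiD_pos {d : ℕ} (_hd : 2 ≤ d) {r : ℝ} (hr : 0 < r) : 0 < psiD d r := by
  unfold psiD
  split
  · have : (1:ℝ) ≤ max r (Real.exp 1) := le_max_of_le_right (by
      linarith [Real.add_one_le_exp (1:ℝ)])
    have := Real.log_nonneg this
    have h2 : Real.log (Real.exp 1) ≤ Real.log (max r (Real.exp 1)) :=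
      Real.log_le_log (Real.exp_pos 1) (le_max_right _ _)
    rw [Real.log_exp] at h2
    linarith
  · exact Real.rpow_pos_of_pos hr _

-- continuity of the dominating function away from 0
lemma contOn_dom (r a : ℝ) {ε : ℝ} (hε : 0 < ε) :
    ContinuousOn (fun s : ℝ => s ^ r * Real.exp (-a / Real.sqrt s)) (Set.Ici ε) := by
  intro s hs
  have hs0 : 0 < s := lt_of_lt_of_le hε hs
  apply ContinuousAt.continuousWithinAt
  have h1 : ContinuousAt (fun s : ℝ => s ^ r) s :=
    Real.continuousAt_rpow_const s r (Or.inl hs0.ne')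
  have hsq : ContinuousAt (fun s : ℝ => Real.sqrt s) s := Real.continuous_sqrt.continuousAt
  have hsqne : Real.sqrt s ≠ 0 := by positivity
  have h2 : ContinuousAt (fun s : ℝ => -a / Real.sqrt s) s :=
    ContinuousAt.div continuousAt_const hsq hsqne
  exact h1.mul (Real.continuous_exp.continuousAt.comp h2)

lemma intervalIntegrable_dom (r a : ℝ) {ε u v : ℝ} (hε : 0 < ε) (hu : ε ≤ u) (hv : ε ≤ v) :
    IntervalIntegrable (fun s : ℝ => s ^ r * Real.exp (-a / Real.sqrt s)) volume u v := by
  apply ContinuousOn.intervalIntegrable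
  apply (contOn_dom r a hε).mono
  intro x hx
  rcases Set.mem_uIcc.mp hx with h | h <;> exact Set.mem_Ici.mpr (by cases h; linarith)

lemma kernel_bound (k : ℕ) {s a : ℝ} (hs : 0 < s) (ha : 0 < a) :
    s ^ (-(k:ℝ)/2) * Real.exp (-a / Real.sqrt s) ≤ k.factorial * a ^ (-(k:ℝ)) := by
  have hsq : 0 < Real.sqrt s := Real.sqrt_pos.mpr hs
  have hx : 0 < a / Real.sqrt s := by positivity
  have h1 : Real.exp (-a / Real.sqrt s) ≤ k.factorial / (a / Real.sqrt s) ^ k := by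
    rw [neg_div]; exact exp_pow_bound k hx
  have hsk : (Real.sqrt s) ^ k = s ^ ((k:ℝ)/2) := by
    rw [Real.sqrt_eq_rpow, ← Real.rpow_natCast (s ^ ((1:ℝ)/2)) k, ← Real.rpow_mul hs.le]
    ring_nf
  have hS : s ^ ((k:ℝ)/2) ≠ 0 := by positivity
  have hA : (a:ℝ) ^ k ≠ 0 := by positivity
  calc s ^ (-(k:ℝ)/2) * Real.exp (-a / Real.sqrt s)
      ≤ s ^ (-(k:ℝ)/2) * (k.factorial / (a / Real.sqrt s) ^ k) := by
        apply mul_le_mul_of_nonneg_left h1 (by positivity)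
    _ = k.factorial * a ^ (-(k:ℝ)) := by
        rw [div_pow, hsk, ← Real.rpow_natCast a k, Real.rpow_neg ha.le,
          show -(k:ℝ)/2 = -((k:ℝ)/2) by ring, Real.rpow_neg hs.le]
        have hA' : a ^ (k:ℝ) ≠ 0 := by positivity
        field_simp

lemma intI1 {d : ℕ} (hd : 3 ≤ d) {ε T₀ : ℝ} (hε : 0 < ε) (hεT : ε ≤ T₀) :
    ∫ s in ε..T₀, s ^ (-(d:ℝ)/2) ≤ 2/((d:ℝ)-2) * ε ^ (((2:ℝ)-(d:ℝ))/2) := by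
  have hd3 : (3:ℝ) ≤ (d:ℝ) := by exact_mod_cast hd
  have hd2 : (0:ℝ) < (d:ℝ) - 2 := by linarith
  have hnm : (0:ℝ) ∉ Set.uIcc ε T₀ := by
    rw [Set.uIcc_of_le hεT]; intro h; exact absurd h.1 (by linarith)
  have hne : -(d:ℝ)/2 ≠ -1 := by intro h; nlinarith
  rw [integral_rpow (Or.inr ⟨hne, hnm⟩)]
  have he : -(d:ℝ)/2 + 1 = ((2:ℝ)-(d:ℝ))/2 := by ring
  rw [he]
  have hr1 : ((2:ℝ)-(d:ℝ))/2 < 0 := by linarith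
  rw [div_le_iff_of_neg hr1]
  have hE : (0:ℝ) < ε ^ (((2:ℝ)-(d:ℝ))/2) := Real.rpow_pos_of_pos hε _
  have hT : (0:ℝ) < T₀ ^ (((2:ℝ)-(d:ℝ))/2) := Real.rpow_pos_of_pos (lt_of_lt_of_le hε hεT) _
  have key : 2/((d:ℝ)-2) * ε ^ (((2:ℝ)-(d:ℝ))/2) * (((2:ℝ)-(d:ℝ))/2)
      = -(ε ^ (((2:ℝ)-(d:ℝ))/2)) := by
    field_simp
    ring
  rw [key]
  linarith

lemma intA {d : ℕ} (hd : 3 ≤ d) {ε T₀ a : ℝ} (hε : 0 < ε) (hεT : ε ≤ T₀) (ha : 0 < a) :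
    ∫ s in ε..T₀, s ^ (-(d:ℝ)/2) * Real.exp (-a / Real.sqrt s)
      ≤ ((d.factorial : ℝ) + 2/((d:ℝ)-2)) * a ^ ((2:ℝ)-(d:ℝ)) := by
  have hd3 : (3:ℝ) ≤ (d:ℝ) := by exact_mod_cast hd
  have hd2 : (0:ℝ) < (d:ℝ) - 2 := by linarith
  set m := min (max ε (a^2)) T₀ with hm
  have hεm : ε ≤ m := le_min (le_max_left _ _) hεT
  have hmT : m ≤ T₀ := min_le_right _ _
  have hm0 : 0 < m := lt_of_lt_of_le hε hεm
  have h1 := intervalIntegrable_dom (-(d:ℝ)/2) a hε le_rfl hεm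
  have h2 := intervalIntegrable_dom (-(d:ℝ)/2) a hε hεm hεT
  have haC : (0:ℝ) < a ^ ((2:ℝ)-(d:ℝ)) := Real.rpow_pos_of_pos ha _
  rw [← intervalIntegral.integral_add_adjacent_intervals h1 h2]
  have hP1 : (∫ s in ε..m, s ^ (-(d:ℝ)/2) * Real.exp (-a / Real.sqrt s))
      ≤ (d.factorial : ℝ) * a ^ ((2:ℝ)-(d:ℝ)) := by
    have hmε : m - ε ≤ a^2 := by
      have h3 : m ≤ max ε (a^2) := min_le_left _ _
      have h4 : max ε (a^2) ≤ ε + a^2 := max_le (by nlinarith) (by nlinarith)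
      linarith
    calc (∫ s in ε..m, s ^ (-(d:ℝ)/2) * Real.exp (-a / Real.sqrt s))
        ≤ ∫ _s in ε..m, (d.factorial : ℝ) * a ^ (-(d:ℝ)) := by
          apply integral_mono_on hεm h1 intervalIntegrable_const
          intro s hs
          exact kernel_bound d (lt_of_lt_of_le hε hs.1) ha
      _ = (m - ε) * ((d.factorial : ℝ) * a ^ (-(d:ℝ))) := by
          rw [intervalIntegral.integral_const, smul_eq_mul]
      _ ≤ a^2 * ((d.factorial : ℝ) * a ^ (-(d:ℝ))) := by
          apply mul_le_mul_of_nonneg_right hmε (by positivity)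
      _ = (d.factorial : ℝ) * a ^ ((2:ℝ)-(d:ℝ)) := by
          rw [show ((2:ℝ)-(d:ℝ)) = (2:ℝ) + (-(d:ℝ)) by ring, Real.rpow_add ha,
            ← Real.rpow_natCast a 2]
          push_cast
          ring
  have hP2 : (∫ s in m..T₀, s ^ (-(d:ℝ)/2) * Real.exp (-a / Real.sqrt s))
      ≤ 2/((d:ℝ)-2) * a ^ ((2:ℝ)-(d:ℝ)) := by
    rcases le_or_gt T₀ (max ε (a^2)) with h | h
    · have hmm : m = T₀ := min_eq_right h
      rw [hmm, intervalIntegral.integral_same]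
      positivity
    · have hmm : m = max ε (a^2) := min_eq_left h.le
      have hma : a^2 ≤ m := hmm ▸ le_max_right _ _
      calc (∫ s in m..T₀, s ^ (-(d:ℝ)/2) * Real.exp (-a / Real.sqrt s))
          ≤ ∫ s in m..T₀, s ^ (-(d:ℝ)/2) := by
            apply integral_mono_on hmT h2
            · apply intervalIntegral.intervalIntegrable_rpow
              right
              rw [Set.uIcc_of_le hmT]
              intro hmem; exact absurd hmem.1 (by linarith)
            · intro s hs
              have hs0 : 0 < s := lt_of_lt_of_le hm0 hs.1
              have : Real.exp (-a / Real.sqrt s) ≤ 1 := by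
                rw [Real.exp_le_one_iff]
                have : 0 < Real.sqrt s := Real.sqrt_pos.mpr hs0
                rw [neg_div]
                simp only [Left.neg_nonpos_iff]
                positivity
              calc s ^ (-(d:ℝ)/2) * Real.exp (-a / Real.sqrt s)
                  ≤ s ^ (-(d:ℝ)/2) * 1 := by
                    apply mul_le_mul_of_nonneg_left this (by positivity)
                _ = s ^ (-(d:ℝ)/2) := mul_one _
        _ ≤ 2/((d:ℝ)-2) * m ^ (((2:ℝ)-(d:ℝ))/2) := intI1 hd hm0 hmT
        _ ≤ 2/((d:ℝ)-2) * a ^ ((2:ℝ)-(d:ℝ)) := by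
            have h5 : m ^ (((2:ℝ)-(d:ℝ))/2) ≤ (a^2) ^ (((2:ℝ)-(d:ℝ))/2) :=
              Real.rpow_le_rpow_of_nonpos (by positivity) hma (by linarith)
            have h6 : ((a:ℝ)^2) ^ (((2:ℝ)-(d:ℝ))/2) = a ^ ((2:ℝ)-(d:ℝ)) := by
              rw [← Real.rpow_natCast a 2, ← Real.rpow_mul ha.le]
              congr 1
              push_cast
              ring
            rw [h6] at h5
            apply mul_le_mul_of_nonneg_left h5 (by positivity)
  linarith

lemma intA2 {ε T₀ a : ℝ} (hε : 0 < ε) (hεT : ε ≤ T₀) (ha : 0 < a) :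
    ∫ s in ε..T₀, s ^ (-(1:ℝ)) * Real.exp (-a / Real.sqrt s)
      ≤ 4 + max (Real.log T₀) 0 + 2 * max (Real.log a⁻¹) 0 := by
  set m := min (max ε (a^2)) T₀ with hm
  have hεm : ε ≤ m := le_min (le_max_left _ _) hεT
  have hmT : m ≤ T₀ := min_le_right _ _
  have hm0 : 0 < m := lt_of_lt_of_le hε hεm
  have h1 := intervalIntegrable_dom (-(1:ℝ)) a hε le_rfl hεm
  have h2 := intervalIntegrable_dom (-(1:ℝ)) a hε hεm hεT
  rw [← intervalIntegral.integral_add_adjacent_intervals h1 h2]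
  have hP1 : (∫ s in ε..m, s ^ (-(1:ℝ)) * Real.exp (-a / Real.sqrt s)) ≤ 4 := by
    rcases le_or_gt (a^2) ε with h | h
    · have hmm : m = ε := by
        rw [hm, max_eq_left h, min_eq_left hεT]
      rw [hmm, intervalIntegral.integral_same]
      norm_num
    · have hma : m ≤ a^2 := le_trans (min_le_left _ _) (le_of_eq (max_eq_right h.le))
      have key : ∀ s ∈ Set.Icc ε m,
          s ^ (-(1:ℝ)) * Real.exp (-a / Real.sqrt s) ≤ 6 * a^(-(3:ℝ)) * s ^ ((1:ℝ)/2) := by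
        intro s hs
        have hs0 : 0 < s := lt_of_lt_of_le hε hs.1
        have hsplit : s ^ (-(1:ℝ)) = s ^ ((1:ℝ)/2) * s ^ ((-(3/2:ℝ))) := by
          rw [← Real.rpow_add hs0]; norm_num
        have hk := kernel_bound 3 hs0 ha
        norm_num at hk
        calc s ^ (-(1:ℝ)) * Real.exp (-a / Real.sqrt s)
            = s ^ ((1:ℝ)/2) * (s ^ ((-(3/2:ℝ))) * Real.exp (-a / Real.sqrt s)) := by
              rw [hsplit]; ring
          _ ≤ s ^ ((1:ℝ)/2) * (6 * a^(-(3:ℝ))) := by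
              apply mul_le_mul_of_nonneg_left _ (by positivity)
              simpa [Real.rpow_neg ha.le] using hk
          _ = 6 * a^(-(3:ℝ)) * s ^ ((1:ℝ)/2) := by ring
      calc (∫ s in ε..m, s ^ (-(1:ℝ)) * Real.exp (-a / Real.sqrt s))
          ≤ ∫ s in ε..m, 6 * a^(-(3:ℝ)) * s ^ ((1:ℝ)/2) := by
            apply integral_mono_on hεm h1 _ key
            apply IntervalIntegrable.const_mul
            exact intervalIntegral.intervalIntegrable_rpow (Or.inl (by norm_num))
        _ = 6 * a^(-(3:ℝ)) * ((m ^ ((1:ℝ)/2 + 1) - ε ^ ((1:ℝ)/2 + 1)) / ((1:ℝ)/2 + 1)) := by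
            rw [intervalIntegral.integral_const_mul, integral_rpow (Or.inl (by norm_num))]
        _ ≤ 6 * a^(-(3:ℝ)) * (m ^ ((3:ℝ)/2) / ((3:ℝ)/2)) := by
            apply mul_le_mul_of_nonneg_left _ (by positivity)
            norm_num
            apply div_le_div_of_nonneg_right _ (by norm_num)
            have : (0:ℝ) < ε ^ ((3:ℝ)/2) := Real.rpow_pos_of_pos hε _
            linarith [this]
        _ ≤ 4 := by
            have h5 : m ^ ((3:ℝ)/2) ≤ (a^2) ^ ((3:ℝ)/2) :=
              Real.rpow_le_rpow hm0.le hma (by norm_num)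
            have h6 : ((a:ℝ)^2) ^ ((3:ℝ)/2) = a ^ (3:ℝ) := by
              rw [← Real.rpow_natCast a 2, ← Real.rpow_mul ha.le]
              norm_num
            have h7 : a^(-(3:ℝ)) * a^(3:ℝ) = 1 := by
              rw [← Real.rpow_add ha]; norm_num
            have h8 : (0:ℝ) < a^(-(3:ℝ)) := Real.rpow_pos_of_pos ha _
            calc 6 * a^(-(3:ℝ)) * (m ^ ((3:ℝ)/2) / ((3:ℝ)/2))
                ≤ 6 * a^(-(3:ℝ)) * (a ^ (3:ℝ) / ((3:ℝ)/2)) := by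
                  apply mul_le_mul_of_nonneg_left _ (by positivity)
                  apply div_le_div_of_nonneg_right _ (by norm_num)
                  rw [← h6]; exact h5
              _ = 4 * (a^(-(3:ℝ)) * a^(3:ℝ)) := by ring
              _ = 4 := by rw [h7]; ring
  have hP2 : (∫ s in m..T₀, s ^ (-(1:ℝ)) * Real.exp (-a / Real.sqrt s))
      ≤ max (Real.log T₀) 0 + 2 * max (Real.log a⁻¹) 0 := by
    rcases le_or_gt T₀ (max ε (a^2)) with h | h
    · have hmm : m = T₀ := min_eq_right h
      rw [hmm, intervalIntegral.integral_same]
      positivity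
    · have hmm : m = max ε (a^2) := min_eq_left h.le
      have hma : a^2 ≤ m := hmm ▸ le_max_right _ _
      have hinv : IntervalIntegrable (fun s : ℝ => s⁻¹) volume m T₀ := by
        apply intervalIntegral.intervalIntegrable_inv
        · intro x hx
          rw [Set.uIcc_of_le hmT] at hx
          exact ne_of_gt (lt_of_lt_of_le hm0 hx.1)
        · exact continuousOn_id
      calc (∫ s in m..T₀, s ^ (-(1:ℝ)) * Real.exp (-a / Real.sqrt s))
          ≤ ∫ s in m..T₀, s⁻¹ := by
            apply integral_mono_on hmT h2 hinv
            intro s hs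
            have hs0 : 0 < s := lt_of_lt_of_le hm0 hs.1
            have hexp : Real.exp (-a / Real.sqrt s) ≤ 1 := by
              rw [Real.exp_le_one_iff, neg_div]
              simp only [Left.neg_nonpos_iff]
              positivity
            calc s ^ (-(1:ℝ)) * Real.exp (-a / Real.sqrt s)
                ≤ s ^ (-(1:ℝ)) * 1 := mul_le_mul_of_nonneg_left hexp (by positivity)
              _ = s⁻¹ := by rw [mul_one, Real.rpow_neg_one]
        _ = Real.log (T₀ / m) := integral_inv (by
            rw [Set.uIcc_of_le hmT]
            intro hmem
            exact absurd hmem.1 (by linarith))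
        _ ≤ max (Real.log T₀) 0 + 2 * max (Real.log a⁻¹) 0 := by
            rw [Real.log_div (ne_of_gt (lt_of_lt_of_le hε hεT)) (ne_of_gt hm0)]
            have h9 : Real.log (a^2) ≤ Real.log m := Real.log_le_log (by positivity) hma
            have h10 : Real.log (a^2) = 2 * Real.log a := by
              rw [← Real.rpow_natCast a 2, Real.log_rpow ha]; norm_num
            have h11 : Real.log a⁻¹ = -Real.log a := Real.log_inv a
            have h12 : Real.log T₀ ≤ max (Real.log T₀) 0 := le_max_left _ _
            have h13 : Real.log a⁻¹ ≤ max (Real.log a⁻¹) 0 := le_max_left _ _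
            linarith
  linarith

lemma intB {d : ℕ} {ε T₀ a : ℝ} (hε : 0 < ε) (hεT : ε ≤ T₀) (ha : 0 < a) :
    ∫ s in ε..T₀, s ^ (-(d:ℝ)/2) * Real.exp (-a / Real.sqrt s)
      ≤ T₀ * ((d.factorial : ℝ) * 2^d * a ^ (-(d:ℝ))) * Real.exp (-(a / (2 * Real.sqrt T₀))) := by
  have hT0 : 0 < T₀ := lt_of_lt_of_le hε hεT
  have hsT : 0 < Real.sqrt T₀ := Real.sqrt_pos.mpr hT0
  have ha2 : 0 < a/2 := by linarith
  set C : ℝ := (d.factorial : ℝ) * 2^d * a ^ (-(d:ℝ)) * Real.exp (-(a / (2 * Real.sqrt T₀))) with hC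
  have hCpos : 0 < C := by positivity
  have hptwise : ∀ s ∈ Set.Icc ε T₀,
      s ^ (-(d:ℝ)/2) * Real.exp (-a / Real.sqrt s) ≤ C := by
    intro s hs
    have hs0 : 0 < s := lt_of_lt_of_le hε hs.1
    have hsq : 0 < Real.sqrt s := Real.sqrt_pos.mpr hs0
    have hsplit : Real.exp (-a / Real.sqrt s)
        = Real.exp (-(a/2) / Real.sqrt s) * Real.exp (-(a/2) / Real.sqrt s) := by
      rw [← Real.exp_add]
      congr 1
      field_simp
      ring
    have h1 : s ^ (-(d:ℝ)/2) * Real.exp (-(a/2) / Real.sqrt s)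
        ≤ (d.factorial : ℝ) * (a/2) ^ (-(d:ℝ)) := kernel_bound d hs0 ha2
    have h2 : Real.exp (-(a/2) / Real.sqrt s) ≤ Real.exp (-(a / (2 * Real.sqrt T₀))) := by
      rw [Real.exp_le_exp]
      rw [neg_div, neg_le_neg_iff, div_div]
      apply div_le_div_of_nonneg_left ha.le (by positivity)
      have : Real.sqrt s ≤ Real.sqrt T₀ := Real.sqrt_le_sqrt hs.2
      nlinarith
    have h3 : ((a:ℝ)/2) ^ (-(d:ℝ)) = 2^(d:ℕ) * a ^ (-(d:ℝ)) := by
      rw [Real.div_rpow ha.le (by norm_num), Real.rpow_neg ha.le, Real.rpow_neg (by norm_num : (0:ℝ) ≤ 2),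
        Real.rpow_natCast]
      field_simp
      norm_cast
    calc s ^ (-(d:ℝ)/2) * Real.exp (-a / Real.sqrt s)
        = (s ^ (-(d:ℝ)/2) * Real.exp (-(a/2) / Real.sqrt s)) * Real.exp (-(a/2) / Real.sqrt s) := by
          rw [hsplit]; ring
      _ ≤ ((d.factorial : ℝ) * (a/2) ^ (-(d:ℝ))) * Real.exp (-(a / (2 * Real.sqrt T₀))) := by
          apply mul_le_mul h1 h2 (Real.exp_pos _).le (by positivity)
      _ = C := by rw [hC, h3]; ring
  calc (∫ s in ε..T₀, s ^ (-(d:ℝ)/2) * Real.exp (-a / Real.sqrt s))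
      ≤ ∫ _s in ε..T₀, C := by
        apply integral_mono_on hεT (intervalIntegrable_dom _ a hε le_rfl hεT)
          intervalIntegrable_const hptwise
    _ = (T₀ - ε) * C := by rw [intervalIntegral.integral_const, smul_eq_mul]
    _ ≤ T₀ * C := by nlinarith
    _ = T₀ * ((d.factorial : ℝ) * 2^d * a ^ (-(d:ℝ))) * Real.exp (-(a / (2 * Real.sqrt T₀))) := by
        rw [hC]; ring

lemma main_bound {d : ℕ} {T κ₁ κ₂ κ₃ κ₄ : ℝ} (hT : 0 < T) (hκ₁ : 0 < κ₁) (hκ₃ : 0 < κ₃)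
    {q : ℝ → (Fin d → ℤ) → ℝ}
    (hq1 : ∀ t : ℝ, 1 / 2 ≤ t → ∀ y,
      q t y ≤ κ₁ * t ^ (-(d : ℝ) / 2) * Real.exp (-κ₂ * znorm y / Real.sqrt t))
    (hq2 : ∀ t : ℝ, 0 < t → t ≤ 1 → ∀ y, q t y ≤ κ₃ * Real.exp (-κ₄ * znorm y))
    {c : ℝ} (hc : 1 ≤ c) (y : Fin d → ℤ)
    (hInt : IntervalIntegrable (fun s => q (c ^ 2 * s) y) volume 0 T) :
    (∫ s in (0:ℝ)..T, q (c ^ 2 * s) y) ≤ κ₃ * Real.exp (-κ₄ * znorm y) * (c ^ 2)⁻¹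
      + κ₁ * c ^ (-(d:ℝ)) *
        ∫ s in (min (c ^ 2)⁻¹ T)..T,
          s ^ (-(d:ℝ)/2) * Real.exp (-(κ₂ * znorm y / c) / Real.sqrt s) := by
  have hc0 : 0 < c := lt_of_lt_of_le one_pos hc
  have hc20 : 0 < c ^ 2 := by positivity
  set ε : ℝ := (c ^ 2)⁻¹ with hεdef
  have hε : 0 < ε := by positivity
  set m₁ : ℝ := min ε T with hm₁def
  have hm₁0 : 0 < m₁ := lt_min hε hT
  have hm₁T : m₁ ≤ T := min_le_right _ _
  have h0m : (0:ℝ) ≤ m₁ := hm₁0.le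
  have hI1 : IntervalIntegrable (fun s => q (c ^ 2 * s) y) volume 0 m₁ := by
    apply hInt.mono_set
    rw [Set.uIcc_of_le h0m, Set.uIcc_of_le (by linarith : (0:ℝ) ≤ T)]
    exact Set.Icc_subset_Icc le_rfl hm₁T
  have hI2 : IntervalIntegrable (fun s => q (c ^ 2 * s) y) volume m₁ T := by
    apply hInt.mono_set
    rw [Set.uIcc_of_le hm₁T, Set.uIcc_of_le (by linarith : (0:ℝ) ≤ T)]
    exact Set.Icc_subset_Icc h0m le_rfl
  rw [← intervalIntegral.integral_add_adjacent_intervals hI1 hI2]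
  apply add_le_add
  · -- small time piece
    rw [intervalIntegral.integral_of_le h0m]
    have hIoc : IntegrableOn (fun s => q (c ^ 2 * s) y) (Set.Ioc 0 m₁) volume :=
      (intervalIntegrable_iff_integrableOn_Ioc_of_le h0m).mp hI1
    have hconst : IntegrableOn (fun _ : ℝ => κ₃ * Real.exp (-κ₄ * znorm y)) (Set.Ioc 0 m₁)
        volume := by
      exact integrableOn_const (by rw [Real.volume_Ioc]; exact ENNReal.ofReal_ne_top)
    calc (∫ s in Set.Ioc 0 m₁, q (c ^ 2 * s) y)
        ≤ ∫ _s in Set.Ioc 0 m₁, κ₃ * Real.exp (-κ₄ * znorm y) := by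
          apply setIntegral_mono_on hIoc hconst measurableSet_Ioc
          intro s hs
          have hs0 : 0 < s := hs.1
          have hpos : 0 < c ^ 2 * s := by positivity
          have hle : c ^ 2 * s ≤ 1 := by
            have hsε : s ≤ ε := le_trans hs.2 (min_le_left _ _)
            calc c ^ 2 * s ≤ c ^ 2 * ε := by
                  apply mul_le_mul_of_nonneg_left hsε (by positivity)
              _ = 1 := mul_inv_cancel₀ hc20.ne'
          exact hq2 _ hpos hle y
      _ = m₁ * (κ₃ * Real.exp (-κ₄ * znorm y)) := by
          rw [setIntegral_const, Real.volume_real_Ioc_of_le h0m, smul_eq_mul]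
          ring_nf
      _ ≤ κ₃ * Real.exp (-κ₄ * znorm y) * ε := by
          have h1 : m₁ ≤ ε := min_le_left _ _
          have h2 : 0 < κ₃ * Real.exp (-κ₄ * znorm y) := by positivity
          nlinarith
  · -- large time piece
    set n : ℝ := znorm y with hn
    set a : ℝ := κ₂ * n / c with ha
    set g : ℝ → ℝ := fun s => s ^ (-(d:ℝ)/2) * Real.exp (-a / Real.sqrt s) with hg
    have hgInt : IntervalIntegrable g volume m₁ T :=
      intervalIntegrable_dom _ _ hm₁0 le_rfl hm₁T
    have hIoc2 : IntegrableOn (fun s => q (c ^ 2 * s) y) (Set.Ioc m₁ T) volume :=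
      (intervalIntegrable_iff_integrableOn_Ioc_of_le hm₁T).mp hI2
    have hgIoc : IntegrableOn (fun s => κ₁ * c ^ (-(d:ℝ)) * g s) (Set.Ioc m₁ T) volume :=
      (intervalIntegrable_iff_integrableOn_Ioc_of_le hm₁T).mp
        (hgInt.const_mul (κ₁ * c ^ (-(d:ℝ))))
    rw [intervalIntegral.integral_of_le hm₁T]
    calc (∫ s in Set.Ioc m₁ T, q (c ^ 2 * s) y)
        ≤ ∫ s in Set.Ioc m₁ T, κ₁ * c ^ (-(d:ℝ)) * g s := by
          apply setIntegral_mono_on hIoc2 hgIoc measurableSet_Ioc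
          intro s hs
          have hεs : ε < s := by
            rcases min_lt_iff.mp hs.1 with h | h
            · exact h
            · exact absurd hs.2 (not_le.mpr h)
          have hs0 : 0 < s := lt_trans hε hεs
          have h1s : 1 < c ^ 2 * s := by
            calc (1:ℝ) = c ^ 2 * ε := (mul_inv_cancel₀ hc20.ne').symm
              _ < c ^ 2 * s := by apply mul_lt_mul_of_pos_left hεs hc20
          have ht : 1 / 2 ≤ c ^ 2 * s := by linarith
          have hq := hq1 (c ^ 2 * s) ht y
          have hsq : 0 < Real.sqrt s := Real.sqrt_pos.mpr hs0
          have e1 : (c ^ 2 * s) ^ (-(d:ℝ)/2) = c ^ (-(d:ℝ)) * s ^ (-(d:ℝ)/2) := by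
            rw [Real.mul_rpow (by positivity) hs0.le]
            congr 1
            rw [← Real.rpow_natCast c 2, ← Real.rpow_mul hc0.le]
            congr 1
            push_cast
            ring
          have e2 : Real.sqrt (c ^ 2 * s) = c * Real.sqrt s := by
            rw [Real.sqrt_mul (by positivity), Real.sqrt_sq hc0.le]
          have e3 : -κ₂ * n / (c * Real.sqrt s) = -a / Real.sqrt s := by
            rw [ha]
            field_simp
          calc q (c ^ 2 * s) y
              ≤ κ₁ * (c ^ 2 * s) ^ (-(d:ℝ)/2) * Real.exp (-κ₂ * n / Real.sqrt (c ^ 2 * s)) := hq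
            _ = κ₁ * c ^ (-(d:ℝ)) * g s := by
                rw [e1, e2, e3, hg]
                ring
      _ = κ₁ * c ^ (-(d:ℝ)) * ∫ s in (m₁:ℝ)..T, g s := by
          rw [← intervalIntegral.integral_of_le hm₁T, intervalIntegral.integral_const_mul]

lemma reduce_bound {d : ℕ} {T κ₁ κ₂ κ₃ κ₄ : ℝ} (hT : 0 < T) (hκ₁ : 0 < κ₁) (hκ₃ : 0 < κ₃)
    {q : ℝ → (Fin d → ℤ) → ℝ}
    (hq1 : ∀ t : ℝ, 1 / 2 ≤ t → ∀ y,
      q t y ≤ κ₁ * t ^ (-(d : ℝ) / 2) * Real.exp (-κ₂ * znorm y / Real.sqrt t))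
    (hq2 : ∀ t : ℝ, 0 < t → t ≤ 1 → ∀ y, q t y ≤ κ₃ * Real.exp (-κ₄ * znorm y))
    {c : ℝ} (hc : 1 ≤ c) (y : Fin d → ℤ) {R : ℝ} (hR : 0 ≤ R)
    (h : κ₃ * Real.exp (-κ₄ * znorm y) * (c ^ 2)⁻¹
      + κ₁ * c ^ (-(d:ℝ)) *
        (∫ s in (min (c ^ 2)⁻¹ T)..T,
          s ^ (-(d:ℝ)/2) * Real.exp (-(κ₂ * znorm y / c) / Real.sqrt s)) ≤ R) :
    (∫ s in (0:ℝ)..T, q (c ^ 2 * s) y) ≤ R := by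
  by_cases hInt : IntervalIntegrable (fun s => q (c ^ 2 * s) y) volume 0 T
  · exact le_trans (main_bound hT hκ₁ hκ₃ hq1 hq2 hc y hInt) h
  · rw [intervalIntegral.integral_undef hInt]
    exact hR

lemma scalar2 {κ₃ κ₁ E ψ lT lc mT : ℝ} (hκ₃ : 0 < κ₃) (hκ₁ : 0 < κ₁) (hE : 0 < E)
    (hψ : 2 ≤ ψ) (hlc : lc ≤ ψ) (hlT : lT ≤ mT) (hmT : 0 ≤ mT) :
    κ₃ * E + κ₁ * E * (lT + lc) ≤ (κ₃/2 + κ₁*(mT/2 + 1)) * E * ψ := by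
  nlinarith [mul_nonneg (mul_nonneg hκ₁.le hE.le) (sub_nonneg.mpr hlc),
    mul_nonneg (mul_nonneg hκ₁.le hE.le) (mul_nonneg hmT (by linarith : (0:ℝ) ≤ ψ - 2)),
    mul_nonneg (mul_nonneg hκ₁.le hE.le) (sub_nonneg.mpr hlT),
    mul_nonneg (mul_nonneg hκ₃.le hE.le) (by linarith : (0:ℝ) ≤ ψ - 2)]

lemma part_one {d : ℕ} (hd : 2 ≤ d) {T κ₁ κ₂ κ₃ κ₄ : ℝ} (hT : 0 < T) (hκ₁ : 0 < κ₁)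
    (hκ₃ : 0 < κ₃)
    {q : ℝ → (Fin d → ℤ) → ℝ}
    (hq1 : ∀ t : ℝ, 1 / 2 ≤ t → ∀ y,
      q t y ≤ κ₁ * t ^ (-(d : ℝ) / 2) * Real.exp (-κ₂ * znorm y / Real.sqrt t))
    (hq2 : ∀ t : ℝ, 0 < t → t ≤ 1 → ∀ y, q t y ≤ κ₃ * Real.exp (-κ₄ * znorm y)) :
    ∃ A > 0, ∀ c : ℝ, 1 ≤ c →
      (∫ s in (0:ℝ)..T, q (c ^ 2 * s) 0) ≤ A * c ^ (-(d : ℝ)) * psiD d c := by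
  rcases eq_or_lt_of_le hd with hd2 | hd3'
  · -- d = 2
    subst hd2
    refine ⟨κ₃/2 + κ₁*((max (Real.log T) 0)/2 + 1), by positivity, fun c hc => ?_⟩
    have hc0 : 0 < c := lt_of_lt_of_le one_pos hc
    have hc20 : 0 < c^2 := by positivity
    set ε : ℝ := (c^2)⁻¹ with hε'
    have hε : 0 < ε := by positivity
    have hψ : psiD 2 c = 2 * Real.log (max c (Real.exp 1)) := by simp [psiD]
    have hψ2 : 2 ≤ psiD 2 c := by
      rw [hψ]
      have : (1:ℝ) ≤ Real.log (max c (Real.exp 1)) := by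
        calc (1:ℝ) = Real.log (Real.exp 1) := (Real.log_exp 1).symm
          _ ≤ _ := Real.log_le_log (Real.exp_pos 1) (le_max_right _ _)
      linarith
    have hψc : 2 * Real.log c ≤ psiD 2 c := by
      rw [hψ]
      have := Real.log_le_log hc0 (le_max_left c (Real.exp 1))
      linarith
    have hX : c ^ (-((2:ℕ):ℝ)) = ε := by
      rw [hε', Real.rpow_neg hc0.le, Real.rpow_natCast]
    apply reduce_bound hT hκ₁ hκ₃ hq1 hq2 hc 0
    · have h0 : (0:ℝ) < psiD 2 c := by linarith
      positivity
    · simp only [znorm_zero, mul_zero, zero_div, neg_zero, Real.exp_zero, mul_one]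
      have hI : (∫ s in (min ε T)..T, s ^ (-((2:ℕ):ℝ)/2))
          ≤ max (Real.log T) 0 + 2 * Real.log c := by
        rcases le_total T ε with h | h
        · rw [min_eq_right h, intervalIntegral.integral_same]
          have : 0 ≤ Real.log c := Real.log_nonneg hc
          have : Real.log T ≤ max (Real.log T) 0 := le_max_left _ _
          positivity
        · rw [min_eq_left h]
          have hconv : (∫ s in ε..T, s ^ (-((2:ℕ):ℝ)/2)) = ∫ s in ε..T, s⁻¹ := by
            simp only [show -((2:ℕ):ℝ)/2 = -1 by norm_num, Real.rpow_neg_one]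
          rw [hconv, integral_inv (by
            rw [Set.uIcc_of_le h]
            intro hmem
            exact absurd hmem.1 (by linarith))]
          rw [Real.log_div (by linarith : T ≠ 0) hε.ne', hε', Real.log_inv, Real.log_pow]
          have : Real.log T ≤ max (Real.log T) 0 := le_max_left _ _
          push_cast
          linarith
      calc κ₃ * ε + κ₁ * c ^ (-((2:ℕ):ℝ)) * (∫ s in (min ε T)..T, s ^ (-((2:ℕ):ℝ)/2))
          ≤ κ₃ * ε + κ₁ * ε * (max (Real.log T) 0 + 2 * Real.log c) := by
            rw [hX]
            have h2 : (0:ℝ) ≤ κ₁ * ε := by positivity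
            nlinarith
        _ ≤ (κ₃/2 + κ₁*((max (Real.log T) 0)/2 + 1)) * ε * psiD 2 c := by
            exact scalar2 hκ₃ hκ₁ hε hψ2 hψc (le_refl _) (le_max_right _ _)
        _ = (κ₃/2 + κ₁*((max (Real.log T) 0)/2 + 1)) * c ^ (-((2:ℕ):ℝ)) * psiD 2 c := by
            rw [hX]
  · -- d ≥ 3
    have hd3 : 3 ≤ d := hd3'
    have hd3R : (3:ℝ) ≤ (d:ℝ) := by exact_mod_cast hd3
    have hdR2 : (0:ℝ) < (d:ℝ) - 2 := by linarith
    refine ⟨κ₃ + κ₁ * (2/((d:ℝ)-2)), by positivity, fun c hc => ?_⟩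
    have hc0 : 0 < c := lt_of_lt_of_le one_pos hc
    have hc20 : 0 < c^2 := by positivity
    set ε : ℝ := (c^2)⁻¹ with hε'
    have hε : 0 < ε := by positivity
    have hψ : psiD d c = c ^ ((d:ℝ)-2) := by
      rw [psiD, if_neg (by omega)]
    have hεX : ε = c ^ (-(2:ℝ)) := by
      rw [hε', ← Real.rpow_natCast c 2, ← Real.rpow_neg hc0.le]
      norm_num
    have e_a : c ^ (-(d:ℝ)) * c ^ ((d:ℝ)-2) = c ^ (-(2:ℝ)) := by
      rw [← Real.rpow_add hc0]
      ring_nf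
    apply reduce_bound hT hκ₁ hκ₃ hq1 hq2 hc 0
    · have h0 : (0:ℝ) < psiD d c := by rw [hψ]; positivity
      positivity
    · simp only [znorm_zero, mul_zero, zero_div, neg_zero, Real.exp_zero, mul_one]
      have hI : (∫ s in (min ε T)..T, s ^ (-(d:ℝ)/2)) ≤ 2/((d:ℝ)-2) * c ^ ((d:ℝ)-2) := by
        rcases le_total T ε with h | h
        · rw [min_eq_right h, intervalIntegral.integral_same]
          positivity
        · rw [min_eq_left h]
          calc (∫ s in ε..T, s ^ (-(d:ℝ)/2)) ≤ 2/((d:ℝ)-2) * ε ^ (((2:ℝ)-(d:ℝ))/2) :=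
              intI1 hd3 hε h
            _ = 2/((d:ℝ)-2) * c ^ ((d:ℝ)-2) := by
              rw [hεX, ← Real.rpow_mul hc0.le]
              congr 2
              ring
      rw [hψ]
      calc κ₃ * ε + κ₁ * c ^ (-(d:ℝ)) * (∫ s in (min ε T)..T, s ^ (-(d:ℝ)/2))
          ≤ κ₃ * ε + κ₁ * c ^ (-(d:ℝ)) * (2/((d:ℝ)-2) * c ^ ((d:ℝ)-2)) := by
            have : (0:ℝ) ≤ κ₁ * c ^ (-(d:ℝ)) := by positivity
            nlinarith
        _ = (κ₃ + κ₁ * (2/((d:ℝ)-2))) * c ^ (-(d:ℝ)) * c ^ ((d:ℝ)-2) := by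
            rw [hεX, ← e_a]
            ring

lemma part_two {d : ℕ} (hd : 2 ≤ d) {T κ₁ κ₂ κ₃ κ₄ : ℝ} (hT : 0 < T) (hκ₁ : 0 < κ₁)
    (hκ₂ : 0 < κ₂) (hκ₃ : 0 < κ₃) (hκ₄ : 0 < κ₄)
    {q : ℝ → (Fin d → ℤ) → ℝ}
    (hq1 : ∀ t : ℝ, 1 / 2 ≤ t → ∀ y,
      q t y ≤ κ₁ * t ^ (-(d : ℝ) / 2) * Real.exp (-κ₂ * znorm y / Real.sqrt t))
    (hq2 : ∀ t : ℝ, 0 < t → t ≤ 1 → ∀ y, q t y ≤ κ₃ * Real.exp (-κ₄ * znorm y)) :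
    ∃ A > 0, ∀ c : ℝ, 1 ≤ c → ∀ y : Fin d → ℤ, y ≠ 0 →
      (∫ s in (0:ℝ)..T, q (c ^ 2 * s) y) ≤ A * c ^ (-(d : ℝ)) * psiD d (c / znorm y) := by
  rcases eq_or_lt_of_le hd with hd2 | hd3'
  · -- d = 2
    subst hd2
    set mT : ℝ := 4 + max (Real.log T) 0 + 2 * max (Real.log κ₂⁻¹) 0 with hmT'
    have hmT0 : 0 ≤ mT := by positivity
    refine ⟨κ₃/2 + κ₁*(mT/2 + 1), by positivity, fun c hc y hy => ?_⟩
    have hc0 : 0 < c := lt_of_lt_of_le one_pos hc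
    have hc20 : 0 < c^2 := by positivity
    have hn1 : 1 ≤ znorm y := one_le_znorm hy
    have hn0 : 0 < znorm y := by linarith
    set n : ℝ := znorm y with hn'
    set ε : ℝ := (c^2)⁻¹ with hε'
    have hε : 0 < ε := by positivity
    set a : ℝ := κ₂ * n / c with ha'
    have ha : 0 < a := by positivity
    have hψ : psiD 2 (c/n) = 2 * Real.log (max (c/n) (Real.exp 1)) := by simp [psiD]
    have hlog1 : (1:ℝ) ≤ Real.log (max (c/n) (Real.exp 1)) := by
      calc (1:ℝ) = Real.log (Real.exp 1) := (Real.log_exp 1).symm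
        _ ≤ _ := Real.log_le_log (Real.exp_pos 1) (le_max_right _ _)
    have hψ2 : 2 ≤ psiD 2 (c/n) := by rw [hψ]; linarith
    have hψpos : 0 < psiD 2 (c/n) := by linarith
    have hX : c ^ (-((2:ℕ):ℝ)) = ε := by
      rw [hε', Real.rpow_neg hc0.le, Real.rpow_natCast]
    apply reduce_bound hT hκ₁ hκ₃ hq1 hq2 hc y
    · positivity
    · -- bound max (log a⁻¹) 0
      have hma : max (Real.log a⁻¹) 0 ≤ psiD 2 (c/n) / 2 + max (Real.log κ₂⁻¹) 0 := by
        have hainv : a⁻¹ = (c/n) * κ₂⁻¹ := by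
          rw [ha']
          field_simp
        have hlog : Real.log a⁻¹ = Real.log (c/n) + Real.log κ₂⁻¹ := by
          rw [hainv, Real.log_mul (by positivity) (by positivity)]
        have h1 : max (Real.log (c/n)) 0 ≤ Real.log (max (c/n) (Real.exp 1)) := by
          apply max_le
          · exact Real.log_le_log (by positivity) (le_max_left _ _)
          · linarith
        calc max (Real.log a⁻¹) 0
            ≤ max (Real.log (c/n)) 0 + max (Real.log κ₂⁻¹) 0 := by
              rw [hlog]
              exact max_le (add_le_add (le_max_left _ _) (le_max_left _ _))
                (add_nonneg (le_max_right _ _) (le_max_right _ _))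
          _ ≤ psiD 2 (c/n) / 2 + max (Real.log κ₂⁻¹) 0 := by
              rw [hψ]
              linarith
      have hI : (∫ s in (min ε T)..T,
          s ^ (-((2:ℕ):ℝ)/2) * Real.exp (-(κ₂ * n / c) / Real.sqrt s))
          ≤ mT + psiD 2 (c/n) := by
        rcases le_total T ε with h | h
        · rw [min_eq_right h, intervalIntegral.integral_same]
          positivity
        · rw [min_eq_left h]
          have hconv : (∫ s in ε..T, s ^ (-((2:ℕ):ℝ)/2) * Real.exp (-(κ₂ * n / c) / Real.sqrt s))
              = ∫ s in ε..T, s ^ (-(1:ℝ)) * Real.exp (-a / Real.sqrt s) := by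
            rw [ha']
            norm_num
          rw [hconv]
          calc (∫ s in ε..T, s ^ (-(1:ℝ)) * Real.exp (-a / Real.sqrt s))
              ≤ 4 + max (Real.log T) 0 + 2 * max (Real.log a⁻¹) 0 := intA2 hε h ha
            _ ≤ mT + psiD 2 (c/n) := by
                rw [hmT']
                linarith
      calc κ₃ * Real.exp (-κ₄ * n) * ε
            + κ₁ * c ^ (-((2:ℕ):ℝ)) * (∫ s in (min ε T)..T,
              s ^ (-((2:ℕ):ℝ)/2) * Real.exp (-(κ₂ * n / c) / Real.sqrt s))
          ≤ κ₃ * ε + κ₁ * ε * (mT + psiD 2 (c/n)) := by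
            rw [hX]
            have he1 : Real.exp (-κ₄ * n) ≤ 1 := by
              rw [Real.exp_le_one_iff]
              nlinarith
            have h2 : (0:ℝ) ≤ κ₁ * ε := by positivity
            have h3 : (∫ s in (min ε T)..T,
              s ^ (-((2:ℕ):ℝ)/2) * Real.exp (-(κ₂ * n / c) / Real.sqrt s)) ≤ mT + psiD 2 (c/n) := hI
            nlinarith [mul_nonneg (mul_nonneg hκ₃.le hε.le) (sub_nonneg.mpr he1),
              mul_nonneg h2 (sub_nonneg.mpr h3)]
        _ ≤ (κ₃/2 + κ₁*(mT/2 + 1)) * ε * psiD 2 (c/n) :=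
            scalar2 hκ₃ hκ₁ hε hψ2 (le_refl _) (le_refl _) hmT0
        _ = (κ₃/2 + κ₁*(mT/2 + 1)) * c ^ (-((2:ℕ):ℝ)) * psiD 2 (c/n) := by rw [hX]
  · -- d ≥ 3
    have hd3 : 3 ≤ d := hd3'
    have hd3R : (3:ℝ) ≤ (d:ℝ) := by exact_mod_cast hd3
    have hdR2 : (0:ℝ) < (d:ℝ) - 2 := by linarith
    have hK : (0:ℝ) < (d.factorial : ℝ) + 2/((d:ℝ)-2) := by positivity
    refine ⟨κ₃ * ((d-2).factorial : ℝ) * κ₄ ^ ((2:ℝ)-(d:ℝ))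
      + κ₁ * ((d.factorial : ℝ) + 2/((d:ℝ)-2)) * κ₂ ^ ((2:ℝ)-(d:ℝ)), by positivity,
      fun c hc y hy => ?_⟩
    have hc0 : 0 < c := lt_of_lt_of_le one_pos hc
    have hc20 : 0 < c^2 := by positivity
    have hn1 : 1 ≤ znorm y := one_le_znorm hy
    have hn0 : 0 < znorm y := by linarith
    set n : ℝ := znorm y with hn'
    set ε : ℝ := (c^2)⁻¹ with hε'
    have hε : 0 < ε := by positivity
    set a : ℝ := κ₂ * n / c with ha'
    have ha : 0 < a := by positivity
    set z : ℝ := (2:ℝ)-(d:ℝ) with hz'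
    have hψ : psiD d (c/n) = (c/n) ^ ((d:ℝ)-2) := by rw [psiD, if_neg (by omega)]
    have hψpos : 0 < psiD d (c/n) := by rw [hψ]; positivity
    have hcast : ((d-2:ℕ):ℝ) = (d:ℝ)-2 := by
      push_cast [Nat.cast_sub (by omega : 2 ≤ d)]
      ring
    -- F1 : exp(-κ₄ n) ≤ (d-2)! κ₄^z n^z
    have F1 : Real.exp (-κ₄ * n) ≤ ((d-2).factorial : ℝ) * (κ₄ ^ z * n ^ z) := by
      have hx : 0 < κ₄ * n := by positivity
      have h := exp_pow_bound (d-2) hx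
      rw [neg_mul]
      calc Real.exp (-(κ₄ * n)) ≤ ((d-2).factorial : ℝ) / (κ₄*n) ^ (d-2) := h
        _ = ((d-2).factorial : ℝ) * (κ₄ ^ z * n ^ z) := by
          rw [← Real.rpow_natCast (κ₄*n) (d-2), hcast, div_eq_mul_inv,
            ← Real.rpow_neg (by positivity), show -((d:ℝ)-2) = z by rw [hz']; ring,
            Real.mul_rpow hκ₄.le hn0.le]
    have e_a : a ^ z = κ₂ ^ z * n ^ z * c ^ ((d:ℝ)-2) := by
      have h1 : a ^ z = κ₂ ^ z * n ^ z / c ^ z := by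
        rw [ha', Real.div_rpow (by positivity) hc0.le, Real.mul_rpow hκ₂.le hn0.le]
      have h2 : c ^ z = (c ^ ((d:ℝ)-2))⁻¹ := by
        rw [hz', show (2:ℝ)-(d:ℝ) = -((d:ℝ)-2) by ring, Real.rpow_neg hc0.le]
      rw [h1, h2, div_inv_eq_mul]
    have e_c : c ^ (-(d:ℝ)) * c ^ ((d:ℝ)-2) = c ^ (-(2:ℝ)) := by
      rw [← Real.rpow_add hc0]
      ring_nf
    have e_ε : ε = c ^ (-(2:ℝ)) := by
      rw [hε', ← Real.rpow_natCast c 2, ← Real.rpow_neg hc0.le]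
      norm_num
    have e_ψ : (c/n) ^ ((d:ℝ)-2) = c ^ ((d:ℝ)-2) * n ^ z := by
      rw [Real.div_rpow hc0.le hn0.le, div_eq_mul_inv, ← Real.rpow_neg hn0.le,
        show -((d:ℝ)-2) = z by rw [hz']; ring]
    apply reduce_bound hT hκ₁ hκ₃ hq1 hq2 hc y
    · positivity
    · have hI : (∫ s in (min ε T)..T,
          s ^ (-(d:ℝ)/2) * Real.exp (-(κ₂ * n / c) / Real.sqrt s))
          ≤ ((d.factorial : ℝ) + 2/((d:ℝ)-2)) * a ^ z := by
        rcases le_total T ε with h | h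
        · rw [min_eq_right h, intervalIntegral.integral_same]
          have : (0:ℝ) < a ^ z := Real.rpow_pos_of_pos ha _
          positivity
        · rw [min_eq_left h, hz']
          exact intA hd3 hε h ha
      have hF : Real.exp (-κ₄ * n) ≤ ((d-2).factorial : ℝ) * (κ₄ ^ z * n ^ z) := F1
      calc κ₃ * Real.exp (-κ₄ * n) * ε + κ₁ * c ^ (-(d:ℝ)) * (∫ s in (min ε T)..T,
            s ^ (-(d:ℝ)/2) * Real.exp (-(κ₂ * n / c) / Real.sqrt s))
          ≤ κ₃ * (((d-2).factorial : ℝ) * (κ₄ ^ z * n ^ z)) * ε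
            + κ₁ * c ^ (-(d:ℝ)) * (((d.factorial : ℝ) + 2/((d:ℝ)-2)) * a ^ z) := by
            apply add_le_add
            · apply mul_le_mul_of_nonneg_right _ hε.le
              exact mul_le_mul_of_nonneg_left hF hκ₃.le
            · apply mul_le_mul_of_nonneg_left hI (by positivity)
        _ = (κ₃ * ((d-2).factorial : ℝ) * κ₄ ^ ((2:ℝ)-(d:ℝ))
              + κ₁ * ((d.factorial : ℝ) + 2/((d:ℝ)-2)) * κ₂ ^ ((2:ℝ)-(d:ℝ)))
            * c ^ (-(d:ℝ)) * psiD d (c/n) := by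
            rw [hψ, e_ψ, e_a, e_ε, ← e_c, ← hz']
            ring

lemma part_three {d : ℕ} (hd : 2 ≤ d) {T κ₁ κ₂ κ₃ κ₄ : ℝ} (hT : 0 < T) (hκ₁ : 0 < κ₁)
    (hκ₂ : 0 < κ₂) (hκ₃ : 0 < κ₃) (hκ₄ : 0 < κ₄)
    {q : ℝ → (Fin d → ℤ) → ℝ}
    (hq1 : ∀ t : ℝ, 1 / 2 ≤ t → ∀ y,
      q t y ≤ κ₁ * t ^ (-(d : ℝ) / 2) * Real.exp (-κ₂ * znorm y / Real.sqrt t))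
    (hq2 : ∀ t : ℝ, 0 < t → t ≤ 1 → ∀ y, q t y ≤ κ₃ * Real.exp (-κ₄ * znorm y)) :
    ∃ A > 0, ∀ c : ℝ, 1 ≤ c → ∀ y : Fin d → ℤ, c < znorm y →
      (∫ s in (0:ℝ)..T, q (c ^ 2 * s) y)
        ≤ A * c ^ (-(d : ℝ)) *
          Real.exp (-(min (κ₂ / (2 * Real.sqrt T)) (κ₄ / 2)) * znorm y / c) := by
  have hdR : (2:ℝ) ≤ (d:ℝ) := by exact_mod_cast hd
  have hsT : 0 < Real.sqrt T := Real.sqrt_pos.mpr hT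
  set L' : ℝ := min (κ₂ / (2 * Real.sqrt T)) (κ₄ / 2) with hL'
  have hL'pos : 0 < L' := lt_min (by positivity) (by positivity)
  refine ⟨κ₃ * ((d-2).factorial : ℝ) * (κ₄/2) ^ ((2:ℝ)-(d:ℝ))
    + κ₁ * T * (d.factorial : ℝ) * 2^d * κ₂ ^ (-(d:ℝ)), by positivity, fun c hc y hcy => ?_⟩
  have hc0 : 0 < c := lt_of_lt_of_le one_pos hc
  have hc20 : 0 < c^2 := by positivity
  set n : ℝ := znorm y with hn'
  have hn0 : 0 < n := lt_trans hc0 hcy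
  set ε : ℝ := (c^2)⁻¹ with hε'
  have hε : 0 < ε := by positivity
  set a : ℝ := κ₂ * n / c with ha'
  have ha : 0 < a := by positivity
  have hnc1 : 1 < n / c := (one_lt_div hc0).mpr hcy
  have haκ : κ₂ ≤ a := by
    rw [ha', mul_div_assoc]
    nlinarith
  set z : ℝ := (2:ℝ)-(d:ℝ) with hz'
  have hz0 : z ≤ 0 := by rw [hz']; linarith
  have hcast : ((d-2:ℕ):ℝ) = (d:ℝ)-2 := by
    push_cast [Nat.cast_sub (by omega : 2 ≤ d)]
    ring
  set E : ℝ := Real.exp (-L' * n / c) with hE'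
  have hEpos : 0 < E := Real.exp_pos _
  have hnc : n / c ≤ n := div_le_self hn0.le hc
  have hLn : L' * n / c ≤ κ₄/2 * n := by
    rw [mul_div_assoc]
    calc L' * (n/c) ≤ κ₄/2 * (n/c) := by
          apply mul_le_mul_of_nonneg_right (min_le_right _ _) (by positivity)
      _ ≤ κ₄/2 * n := by
          apply mul_le_mul_of_nonneg_left hnc (by positivity)
  -- term 1 exponential estimate
  have F1 : Real.exp (-κ₄ * n) ≤ (((d-2).factorial : ℝ) * ((κ₄/2) ^ z * c ^ z)) * E := by
    have hsplit : -κ₄ * n = -(κ₄/2 * n) + -(κ₄/2 * n) := by ring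
    rw [hsplit, Real.exp_add]
    have h_a : Real.exp (-(κ₄/2 * n)) ≤ ((d-2).factorial : ℝ) * ((κ₄/2) ^ z * c ^ z) := by
      have hx : 0 < κ₄/2 * n := by positivity
      have h := exp_pow_bound (d-2) hx
      have heq : ((d-2).factorial : ℝ) / (κ₄/2*n) ^ (d-2)
          = ((d-2).factorial : ℝ) * ((κ₄/2) ^ z * n ^ z) := by
        rw [← Real.rpow_natCast (κ₄/2*n) (d-2), hcast, div_eq_mul_inv,
          ← Real.rpow_neg (by positivity), show -((d:ℝ)-2) = z by rw [hz']; ring,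
          Real.mul_rpow (by positivity) hn0.le]
      have hnz : n ^ z ≤ c ^ z := Real.rpow_le_rpow_of_nonpos hc0 hcy.le hz0
      calc Real.exp (-(κ₄/2 * n)) ≤ ((d-2).factorial : ℝ) / (κ₄/2*n) ^ (d-2) := h
        _ = ((d-2).factorial : ℝ) * ((κ₄/2) ^ z * n ^ z) := heq
        _ ≤ ((d-2).factorial : ℝ) * ((κ₄/2) ^ z * c ^ z) := by
            apply mul_le_mul_of_nonneg_left _ (by positivity)
            apply mul_le_mul_of_nonneg_left hnz (by positivity)
    have h_b : Real.exp (-(κ₄/2 * n)) ≤ E := by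
      rw [hE', Real.exp_le_exp]
      rw [neg_mul, neg_div, neg_le_neg_iff]
      exact hLn
    exact mul_le_mul h_a h_b (Real.exp_pos _).le (by positivity)
  -- term 2 integral estimate
  have hI : (∫ s in (min ε T)..T,
      s ^ (-(d:ℝ)/2) * Real.exp (-(κ₂ * n / c) / Real.sqrt s))
      ≤ T * ((d.factorial : ℝ) * 2^d * κ₂ ^ (-(d:ℝ))) * E := by
    rcases le_total T ε with h | h
    · rw [min_eq_right h, intervalIntegral.integral_same]
      positivity
    · rw [min_eq_left h]
      have hB := intB (d := d) hε h ha
      have ha2 : a ^ (-(d:ℝ)) ≤ κ₂ ^ (-(d:ℝ)) :=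
        Real.rpow_le_rpow_of_nonpos hκ₂ haκ (by linarith)
      have hexp : Real.exp (-(a / (2 * Real.sqrt T))) ≤ E := by
        rw [hE', Real.exp_le_exp]
        rw [neg_mul, neg_div, neg_le_neg_iff]
        have heq2 : a / (2 * Real.sqrt T) = (κ₂ / (2 * Real.sqrt T)) * (n/c) := by
          rw [ha']
          field_simp
        rw [heq2, mul_div_assoc]
        apply mul_le_mul_of_nonneg_right (min_le_left _ _) (by positivity)
      calc (∫ s in ε..T, s ^ (-(d:ℝ)/2) * Real.exp (-(κ₂ * n / c) / Real.sqrt s))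
          ≤ T * ((d.factorial : ℝ) * 2^d * a ^ (-(d:ℝ))) * Real.exp (-(a / (2 * Real.sqrt T))) := hB
        _ ≤ T * ((d.factorial : ℝ) * 2^d * κ₂ ^ (-(d:ℝ))) * E := by
            apply mul_le_mul _ hexp (Real.exp_pos _).le (by positivity)
            apply mul_le_mul_of_nonneg_left _ hT.le
            apply mul_le_mul_of_nonneg_left ha2 (by positivity)
  -- assembly
  have e_ε : ε = c ^ (-(2:ℝ)) := by
    rw [hε', ← Real.rpow_natCast c 2, ← Real.rpow_neg hc0.le]
    norm_num
  have e_t : c ^ z * c ^ (-(2:ℝ)) = c ^ (-(d:ℝ)) := by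
    rw [← Real.rpow_add hc0]
    congr 1
    rw [hz']
    ring
  apply reduce_bound hT hκ₁ hκ₃ hq1 hq2 hc y
  · positivity
  · calc κ₃ * Real.exp (-κ₄ * n) * ε + κ₁ * c ^ (-(d:ℝ)) * (∫ s in (min ε T)..T,
        s ^ (-(d:ℝ)/2) * Real.exp (-(κ₂ * n / c) / Real.sqrt s))
        ≤ κ₃ * ((((d-2).factorial : ℝ) * ((κ₄/2) ^ z * c ^ z)) * E) * ε
          + κ₁ * c ^ (-(d:ℝ)) * (T * ((d.factorial : ℝ) * 2^d * κ₂ ^ (-(d:ℝ))) * E) := by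
          apply add_le_add
          · exact mul_le_mul_of_nonneg_right (mul_le_mul_of_nonneg_left F1 hκ₃.le) hε.le
          · exact mul_le_mul_of_nonneg_left hI (by positivity)
      _ = (κ₃ * ((d-2).factorial : ℝ) * (κ₄/2) ^ ((2:ℝ)-(d:ℝ))
            + κ₁ * T * (d.factorial : ℝ) * 2^d * κ₂ ^ (-(d:ℝ))) * c ^ (-(d:ℝ)) * E := by
          rw [e_ε, ← e_t, ← hz']
          ring

theorem stmt8 (d : ℕ) (hd : 2 ≤ d) (T κ₁ κ₂ κ₃ κ₄ : ℝ)
    (hT : 0 < T) (hκ₁ : 0 < κ₁) (hκ₂ : 0 < κ₂) (hκ₃ : 0 < κ₃) (hκ₄ : 0 < κ₄)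
    (hκ : 4 * κ₂ ≤ κ₄)
    (q : ℝ → (Fin d → ℤ) → ℝ)
    (hq01 : ∀ t : ℝ, 0 < t → ∀ y, q t y ∈ Set.Icc (0 : ℝ) 1)
    (hq1 : ∀ t : ℝ, 1 / 2 ≤ t → ∀ y,
      q t y ≤ κ₁ * t ^ (-(d : ℝ) / 2) * Real.exp (-κ₂ * znorm y / Real.sqrt t))
    (hq2 : ∀ t : ℝ, 0 < t → t ≤ 1 → ∀ y, q t y ≤ κ₃ * Real.exp (-κ₄ * znorm y)) :
    ∃ L₂ > 0, ∃ L₂' > 0, ∀ c : ℝ, 1 ≤ c →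
      ((∫ s in (0:ℝ)..T, q (c ^ 2 * s) 0) ≤ L₂ * c ^ (-(d : ℝ)) * psiD d c) ∧
      (∀ y : Fin d → ℤ, y ≠ 0 →
        (∫ s in (0:ℝ)..T, q (c ^ 2 * s) y) ≤ L₂ * c ^ (-(d : ℝ)) * psiD d (c / znorm y)) ∧
      (∀ y : Fin d → ℤ, c < znorm y →
        (∫ s in (0:ℝ)..T, q (c ^ 2 * s) y) ≤ L₂ * c ^ (-(d : ℝ)) * Real.exp (-L₂' * znorm y / c)) := by
  obtain ⟨A₁, hA₁, H₁⟩ := part_one hd hT hκ₁ hκ₃ hq1 hq2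
  obtain ⟨A₂, hA₂, H₂⟩ := part_two hd hT hκ₁ hκ₂ hκ₃ hκ₄ hq1 hq2
  obtain ⟨A₃, hA₃, H₃⟩ := part_three hd hT hκ₁ hκ₂ hκ₃ hκ₄ hq1 hq2
  have hsT : 0 < Real.sqrt T := Real.sqrt_pos.mpr hT
  refine ⟨A₁ + A₂ + A₃, by positivity, min (κ₂ / (2 * Real.sqrt T)) (κ₄ / 2),
    lt_min (by positivity) (by positivity), fun c hc => ?_⟩
  have hc0 : 0 < c := lt_of_lt_of_le one_pos hc
  have hX : (0:ℝ) ≤ c ^ (-(d:ℝ)) := Real.rpow_nonneg hc0.le _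
  refine ⟨?_, fun y hy => ?_, fun y hcy => ?_⟩
  · refine le_trans (H₁ c hc) ?_
    rw [mul_assoc, mul_assoc]
    exact mul_le_mul_of_nonneg_right (by linarith)
      (mul_nonneg hX (psiD_pos hd hc0).le)
  · refine le_trans (H₂ c hc y hy) ?_
    have hn0 : 0 < znorm y := lt_of_lt_of_le one_pos (one_le_znorm hy)
    rw [mul_assoc, mul_assoc]
    exact mul_le_mul_of_nonneg_right (by linarith)
      (mul_nonneg hX (psiD_pos hd (by positivity : (0:ℝ) < c / znorm y)).le)
  · refine le_trans (H₃ c hc y hcy) ?_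
    rw [mul_assoc, mul_assoc]
    exact mul_le_mul_of_nonneg_right (by linarith)
      (mul_nonneg hX (Real.exp_pos _).le)
end

section
/- Let d ≥ 2 and κ̃₁, κ̃₂ > 0, and set f̃_u(w) = κ̃₁ u^{-d/2} exp(−κ̃₂|w|/√u) for u > 0, w ∈ ℝ^d. There exists a constant K > 0, depending only on d, κ̃₁, κ̃₂, such that for every y ∈ ℝ^d with y ≠ 0, every z ∈ ℝ^d, and every b > |y|^{-2}: ∫_{|y|^{-2}}^{b} f̃_u(z/|y|) f̃_u((z−y)/|y|) du ≤ K max(|z|/|y|, 1)^{2−2d}. -/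
open MeasureTheory intervalIntegral

lemma contOn (d : ℕ) (κ₁ A κ₂ : ℝ) :
    ContinuousOn (fun u : ℝ => κ₁ * u ^ (-(d:ℝ)/2) * Real.exp (-κ₂ * A / Real.sqrt u))
      {u : ℝ | 0 < u} := by
  apply ContinuousOn.mul
  · apply ContinuousOn.mul continuousOn_const
    exact fun u hu => (Real.continuousAt_rpow_const u _ (Or.inl (ne_of_gt hu))).continuousWithinAt
  · apply Real.continuous_exp.comp_continuousOn
    apply ContinuousOn.div continuousOn_const Real.continuous_sqrt.continuousOn
    exact fun u hu => ne_of_gt (Real.sqrt_pos.mpr hu)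

lemma contOn_rpow (d : ℕ) (c : ℝ) :
    ContinuousOn (fun u : ℝ => c * u ^ (-(d:ℝ))) {u : ℝ | 0 < u} :=
  ContinuousOn.mul continuousOn_const
    (fun u hu => (Real.continuousAt_rpow_const u _ (Or.inl (ne_of_gt hu))).continuousWithinAt)

lemma core (d : ℕ) (hd : 2 ≤ d) (κ₁ κ₂ : ℝ) (hκ₁ : 0 < κ₁) (hκ₂ : 0 < κ₂)
    (a b M A B : ℝ) (ha : 0 < a) (hab : a < b) (hM : 1 ≤ M)
    (hA : 0 ≤ A) (hB : 0 ≤ B) (hMAB : M ≤ A + B) :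
    (∫ u in a..b,
        (κ₁ * u ^ (-(d:ℝ)/2) * Real.exp (-κ₂ * A / Real.sqrt u)) *
          (κ₁ * u ^ (-(d:ℝ)/2) * Real.exp (-κ₂ * B / Real.sqrt u)))
      ≤ (κ₁ ^ 2 * ((Nat.factorial (2*d) : ℝ) / κ₂ ^ (2*d) + 1)) * (M ^ (2*d - 2))⁻¹ := by
  have hM0 : (0:ℝ) < M := lt_of_lt_of_le one_pos hM
  have hd1 : (1:ℝ) ≤ (d:ℝ) - 1 := by
    have : (2:ℝ) ≤ (d:ℝ) := by exact_mod_cast hd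
    linarith
  set C₀ : ℝ := (Nat.factorial (2*d) : ℝ) / κ₂ ^ (2*d) with hC₀def
  have hC₀ : 0 < C₀ := by positivity
  set f : ℝ → ℝ := fun u =>
    (κ₁ * u ^ (-(d:ℝ)/2) * Real.exp (-κ₂ * A / Real.sqrt u)) *
      (κ₁ * u ^ (-(d:ℝ)/2) * Real.exp (-κ₂ * B / Real.sqrt u)) with hfdef
  -- pointwise bound to single exponential
  have hpt : ∀ u : ℝ, 0 < u → f u ≤ κ₁^2 * u ^ (-(d:ℝ)) * Real.exp (-(κ₂*M) / Real.sqrt u) := by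
    intro u hu
    have hs : 0 < Real.sqrt u := Real.sqrt_pos.mpr hu
    have h1 : u ^ (-(d:ℝ)/2) * u ^ (-(d:ℝ)/2) = u ^ (-(d:ℝ)) := by
      rw [← Real.rpow_add hu]; ring_nf
    have h2 : Real.exp (-κ₂ * A / Real.sqrt u) * Real.exp (-κ₂ * B / Real.sqrt u)
        = Real.exp (-(κ₂*(A+B)) / Real.sqrt u) := by
      rw [← Real.exp_add]; congr 1; ring
    have h3 : Real.exp (-(κ₂*(A+B)) / Real.sqrt u) ≤ Real.exp (-(κ₂*M) / Real.sqrt u) := by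
      apply Real.exp_le_exp.mpr
      exact (div_le_div_iff_of_pos_right hs).mpr (by nlinarith)
    calc f u = κ₁^2 * (u ^ (-(d:ℝ)/2) * u ^ (-(d:ℝ)/2)) *
          (Real.exp (-κ₂ * A / Real.sqrt u) * Real.exp (-κ₂ * B / Real.sqrt u)) := by
            rw [hfdef]; ring
      _ = κ₁^2 * u ^ (-(d:ℝ)) * Real.exp (-(κ₂*(A+B)) / Real.sqrt u) := by rw [h1, h2]
      _ ≤ κ₁^2 * u ^ (-(d:ℝ)) * Real.exp (-(κ₂*M) / Real.sqrt u) := by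
          apply mul_le_mul_of_nonneg_left h3; positivity
  -- pointwise bound 1 : f u ≤ κ₁² u^{-d}
  have hpt1 : ∀ u : ℝ, 0 < u → f u ≤ κ₁^2 * u ^ (-(d:ℝ)) := by
    intro u hu
    refine (hpt u hu).trans ?_
    have hs : 0 < Real.sqrt u := Real.sqrt_pos.mpr hu
    have he : Real.exp (-(κ₂*M) / Real.sqrt u) ≤ 1 := by
      apply Real.exp_le_one_iff.mpr
      apply div_nonpos_of_nonpos_of_nonneg (by nlinarith) hs.le
    nlinarith [Real.rpow_pos_of_pos hu (-(d:ℝ)), sq_nonneg κ₁,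
      mul_le_mul_of_nonneg_left he (by positivity : (0:ℝ) ≤ κ₁^2 * u ^ (-(d:ℝ)))]
  -- pointwise bound 2 : f u ≤ κ₁² C₀ (M^{2d})⁻¹
  have hpt2 : ∀ u : ℝ, 0 < u → f u ≤ κ₁^2 * C₀ * ((M:ℝ)^(2*d))⁻¹ := by
    intro u hu
    refine (hpt u hu).trans ?_
    have hs : 0 < Real.sqrt u := Real.sqrt_pos.mpr hu
    set x : ℝ := κ₂ * M / Real.sqrt u with hxdef
    have hx : 0 < x := by positivity
    have hxe : x ^ (2*d) / (Nat.factorial (2*d) : ℝ) ≤ Real.exp x :=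
      Real.pow_div_factorial_le_exp x hx.le (2*d)
    have hexp : Real.exp (-(κ₂*M) / Real.sqrt u) ≤ (Nat.factorial (2*d) : ℝ) / x ^ (2*d) := by
      have h0 : -(κ₂*M) / Real.sqrt u = -x := by rw [hxdef]; ring
      rw [h0, Real.exp_neg, inv_le_iff_one_le_mul₀ (Real.exp_pos x)]
      calc (1:ℝ) = (Nat.factorial (2*d) : ℝ) / x ^ (2*d) * (x ^ (2*d) / (Nat.factorial (2*d) : ℝ)) := by
            field_simp
        _ ≤ (Nat.factorial (2*d) : ℝ) / x ^ (2*d) * Real.exp x :=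
            mul_le_mul_of_nonneg_left hxe (by positivity)
    have hx2d : x ^ (2*d) = (κ₂*M)^(2*d) / u ^ d := by
      rw [hxdef, div_pow]
      congr 1
      rw [pow_mul, Real.sq_sqrt hu.le]
    have hupow : u ^ (-(d:ℝ)) = ((u:ℝ)^(d:ℕ))⁻¹ := by
      rw [← Real.rpow_natCast u d, ← Real.rpow_neg hu.le]
    have hfac : (Nat.factorial (2*d) : ℝ) / x ^ (2*d) = (Nat.factorial (2*d) : ℝ) * u^d / (κ₂*M)^(2*d) := by
      rw [hx2d]
      field_simp
    calc κ₁^2 * u ^ (-(d:ℝ)) * Real.exp (-(κ₂*M) / Real.sqrt u)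
        ≤ κ₁^2 * u ^ (-(d:ℝ)) * ((Nat.factorial (2*d) : ℝ) * u^d / (κ₂*M)^(2*d)) := by
          rw [← hfac]; apply mul_le_mul_of_nonneg_left hexp; positivity
      _ = κ₁^2 * C₀ * ((M:ℝ)^(2*d))⁻¹ := by
          rw [hupow, hC₀def, mul_pow]
          have hud : (u:ℝ)^(d:ℕ) ≠ 0 := by positivity
          field_simp
  -- integrability
  have hIf : ∀ p q : ℝ, 0 < p → 0 < q → IntervalIntegrable f volume p q := by
    intro p q hp hq
    apply ContinuousOn.intervalIntegrable
    exact ((contOn d κ₁ A κ₂).mul (contOn d κ₁ B κ₂)).mono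
      (fun u hu => lt_of_lt_of_le (lt_min hp hq) hu.1)
  have hIg : ∀ p q : ℝ, 0 < p → 0 < q →
      IntervalIntegrable (fun u : ℝ => κ₁^2 * u ^ (-(d:ℝ))) volume p q := by
    intro p q hp hq
    apply ContinuousOn.intervalIntegrable
    exact (contOn_rpow d (κ₁^2)).mono (fun u hu => lt_of_lt_of_le (lt_min hp hq) hu.1)
  -- constant bound on finite interval
  have BNDc : ∀ p q : ℝ, 0 < p → p ≤ q →
      (∫ u in p..q, f u) ≤ κ₁^2 * C₀ * ((M:ℝ)^(2*d))⁻¹ * (q - p) := by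
    intro p q hp hpq
    have := intervalIntegral.integral_mono_on hpq (hIf p q hp (lt_of_lt_of_le hp hpq))
      (_root_.intervalIntegrable_const)
      (fun u hu => hpt2 u (lt_of_lt_of_le hp hu.1))
    rwa [intervalIntegral.integral_const, smul_eq_mul, mul_comm] at this
  -- tail bound
  have BNDt : ∀ p q : ℝ, 0 < p → p ≤ q →
      (∫ u in p..q, f u) ≤ κ₁^2 * p ^ ((1:ℝ) - d) := by
    intro p q hp hpq
    have hq : 0 < q := lt_of_lt_of_le hp hpq
    have h1 : (∫ u in p..q, f u) ≤ ∫ u in p..q, κ₁^2 * u ^ (-(d:ℝ)) :=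
      intervalIntegral.integral_mono_on hpq (hIf p q hp hq) (hIg p q hp hq)
        (fun u hu => hpt1 u (lt_of_lt_of_le hp hu.1))
    have h0mem : (0:ℝ) ∉ Set.uIcc p q := by
      intro h
      exact absurd (Set.mem_uIcc.mp h) (by push_neg; constructor <;> intro h' <;> linarith)
    have hne : -(d:ℝ) ≠ -1 := by
      intro h
      have : (d:ℝ) = 1 := by linarith
      have : (2:ℝ) ≤ (d:ℝ) := by exact_mod_cast hd
      linarith
    have h2 : (∫ u in p..q, κ₁^2 * u ^ (-(d:ℝ)))
        = κ₁^2 * ((q ^ (-(d:ℝ) + 1) - p ^ (-(d:ℝ) + 1)) / (-(d:ℝ) + 1)) := by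
      rw [intervalIntegral.integral_const_mul, integral_rpow (Or.inr ⟨hne, h0mem⟩)]
    have hanti : q ^ (-(d:ℝ) + 1) ≤ p ^ (-(d:ℝ) + 1) :=
      Real.rpow_le_rpow_of_nonpos hp hpq (by linarith)
    have hqpos : 0 ≤ q ^ (-(d:ℝ) + 1) := (Real.rpow_pos_of_pos hq _).le
    have h3 : (q ^ (-(d:ℝ) + 1) - p ^ (-(d:ℝ) + 1)) / (-(d:ℝ) + 1) ≤ p ^ ((1:ℝ) - d) := by
      have he : ((1:ℝ) - d) = -(d:ℝ) + 1 := by ring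
      rw [he]
      rw [div_le_iff_of_neg (by linarith : -(d:ℝ) + 1 < 0)]
      nlinarith [Real.rpow_pos_of_pos hp (-(d:ℝ) + 1)]
    calc (∫ u in p..q, f u) ≤ κ₁^2 * ((q ^ (-(d:ℝ) + 1) - p ^ (-(d:ℝ) + 1)) / (-(d:ℝ) + 1)) :=
          h1.trans_eq h2
      _ ≤ κ₁^2 * p ^ ((1:ℝ) - d) := by
          apply mul_le_mul_of_nonneg_left h3; positivity
  -- conversion between rpow and npow
  have h22d : (2:ℕ) ≤ 2*d := by omega
  have hconv : ((M:ℝ)^2) ^ ((1:ℝ) - d) = ((M:ℝ) ^ (2*d-2))⁻¹ := by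
    have h1 : ((M:ℝ)^2) ^ ((1:ℝ) - d) = M ^ ((2:ℝ) * (1 - d)) := by
      rw [Real.rpow_mul hM0.le, Real.rpow_two]
    rw [h1, ← Real.rpow_natCast M (2*d-2), ← Real.rpow_neg hM0.le]
    congr 1
    rw [Nat.cast_sub h22d]
    push_cast
    ring
  have hM2d : (M:ℝ)^(2*d) = (M:ℝ)^(2*d-2) * M^2 := by
    rw [← pow_add]; congr 1; omega
  have hMpos1 : (0:ℝ) < M ^ (2*d-2) := by positivity
  have hMpos2 : (0:ℝ) < M ^ (2*d) := by positivity
  -- main case analysis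
  rcases le_or_gt (M^2) a with hMa | hMa
  · -- a ≥ M²: tail bound only
    calc (∫ u in a..b, f u) ≤ κ₁^2 * a ^ ((1:ℝ) - d) := BNDt a b ha hab.le
      _ ≤ κ₁^2 * ((M:ℝ)^2) ^ ((1:ℝ) - d) := by
          apply mul_le_mul_of_nonneg_left
            (Real.rpow_le_rpow_of_nonpos (by positivity) hMa (by linarith)) (by positivity)
      _ = κ₁^2 * ((M:ℝ) ^ (2*d-2))⁻¹ := by rw [hconv]
      _ ≤ (κ₁ ^ 2 * (C₀ + 1)) * (M ^ (2*d - 2))⁻¹ := by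
          apply mul_le_mul_of_nonneg_right _ (by positivity)
          nlinarith
  · rcases le_or_gt b (M^2) with hbM | hbM
    · -- whole interval in constant-bound regime
      calc (∫ u in a..b, f u) ≤ κ₁^2 * C₀ * ((M:ℝ)^(2*d))⁻¹ * (b - a) := BNDc a b ha hab.le
        _ ≤ κ₁^2 * C₀ * ((M:ℝ)^(2*d))⁻¹ * M^2 := by
            apply mul_le_mul_of_nonneg_left (by linarith) (by positivity)
        _ = κ₁^2 * C₀ * ((M:ℝ)^(2*d-2))⁻¹ := by
            rw [hM2d]; field_simp
        _ ≤ (κ₁ ^ 2 * (C₀ + 1)) * (M ^ (2*d - 2))⁻¹ := by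
            apply mul_le_mul_of_nonneg_right _ (by positivity)
            nlinarith
    · -- split at M²
      have hsplit : (∫ u in a..b, f u) = (∫ u in a..(M^2), f u) + ∫ u in (M^2)..b, f u :=
        (intervalIntegral.integral_add_adjacent_intervals
          (hIf a (M^2) ha (by positivity)) (hIf (M^2) b (by positivity) (ha.trans hab))).symm
      have hb1 : (∫ u in a..(M^2), f u) ≤ κ₁^2 * C₀ * ((M:ℝ)^(2*d-2))⁻¹ := by
        calc (∫ u in a..(M^2), f u) ≤ κ₁^2 * C₀ * ((M:ℝ)^(2*d))⁻¹ * (M^2 - a) :=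
              BNDc a (M^2) ha hMa.le
          _ ≤ κ₁^2 * C₀ * ((M:ℝ)^(2*d))⁻¹ * M^2 := by
              apply mul_le_mul_of_nonneg_left (by linarith) (by positivity)
          _ = κ₁^2 * C₀ * ((M:ℝ)^(2*d-2))⁻¹ := by rw [hM2d]; field_simp
      have hb2 : (∫ u in (M^2)..b, f u) ≤ κ₁^2 * ((M:ℝ)^(2*d-2))⁻¹ := by
        calc (∫ u in (M^2)..b, f u) ≤ κ₁^2 * ((M:ℝ)^2) ^ ((1:ℝ) - d) :=
              BNDt (M^2) b (by positivity) hbM.le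
          _ = κ₁^2 * ((M:ℝ)^(2*d-2))⁻¹ := by rw [hconv]
      calc (∫ u in a..b, f u) ≤ κ₁^2 * C₀ * ((M:ℝ)^(2*d-2))⁻¹ + κ₁^2 * ((M:ℝ)^(2*d-2))⁻¹ := by
            rw [hsplit]; exact add_le_add hb1 hb2
        _ = (κ₁ ^ 2 * (C₀ + 1)) * (M ^ (2*d - 2))⁻¹ := by ring

noncomputable def rnorm {d : ℕ} (v : Fin d → ℝ) : ℝ :=
  Real.sqrt (∑ i, (v i) ^ 2)

lemma rnorm_eq_norm {d : ℕ} (v : Fin d → ℝ) :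
    rnorm v = ‖(WithLp.equiv 2 (Fin d → ℝ)).symm v‖ := by
  rw [EuclideanSpace.norm_eq]
  simp [rnorm, Real.norm_eq_abs, sq_abs]

lemma rnorm_nonneg {d : ℕ} (v : Fin d → ℝ) : 0 ≤ rnorm v := Real.sqrt_nonneg _

lemma rnorm_pos {d : ℕ} {v : Fin d → ℝ} (hv : v ≠ 0) : 0 < rnorm v := by
  rw [rnorm_eq_norm]
  simpa using hv

lemma rnorm_div {d : ℕ} (z : Fin d → ℝ) {r : ℝ} (hr : 0 < r) :
    rnorm (fun i => z i / r) = rnorm z / r := by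
  unfold rnorm
  have h1 : ∑ i, (z i / r) ^ 2 = (∑ i, z i ^ 2) / r ^ 2 := by
    simp_rw [div_pow]; rw [← Finset.sum_div]
  rw [h1, Real.sqrt_div (Finset.sum_nonneg fun i _ => sq_nonneg _), Real.sqrt_sq hr.le]

lemma rnorm_tri {d : ℕ} (z y : Fin d → ℝ) :
    rnorm y ≤ rnorm z + rnorm (fun i => z i - y i) := by
  rw [rnorm_eq_norm, rnorm_eq_norm, rnorm_eq_norm]
  have h : (WithLp.equiv 2 (Fin d → ℝ)).symm y
      = (WithLp.equiv 2 (Fin d → ℝ)).symm z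
        - (WithLp.equiv 2 (Fin d → ℝ)).symm (fun i => z i - y i) := by
    ext i; simp
  rw [h]
  exact norm_sub_le _ _
theorem stmt14 (d : ℕ) (hd : 2 ≤ d) (κ₁ κ₂ : ℝ) (hκ₁ : 0 < κ₁) (hκ₂ : 0 < κ₂) :
    ∃ K > 0, ∀ y : Fin d → ℝ, y ≠ 0 → ∀ z : Fin d → ℝ, ∀ b : ℝ,
      ((rnorm y) ^ 2)⁻¹ < b →
      (∫ u in (((rnorm y) ^ 2)⁻¹)..b,
          (κ₁ * u ^ (-(d : ℝ) / 2) *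
              Real.exp (-κ₂ * rnorm (fun i => z i / rnorm y) / Real.sqrt u)) *
            (κ₁ * u ^ (-(d : ℝ) / 2) *
              Real.exp (-κ₂ * rnorm (fun i => (z i - y i) / rnorm y) / Real.sqrt u)))
        ≤ K * (max (rnorm z / rnorm y) 1) ^ ((2 : ℝ) - 2 * d) := by
  refine ⟨κ₁ ^ 2 * ((Nat.factorial (2*d) : ℝ) / κ₂ ^ (2*d) + 1), by positivity, ?_⟩
  intro y hy z b hb
  have hr : 0 < rnorm y := rnorm_pos hy
  set r := rnorm y with hrdef
  set M : ℝ := max (rnorm z / r) 1 with hMdef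
  have hM : 1 ≤ M := le_max_right _ _
  have hM0 : (0:ℝ) < M := lt_of_lt_of_le one_pos hM
  set A : ℝ := rnorm (fun i => z i / r) with hAdef
  set B : ℝ := rnorm (fun i => (z i - y i) / r) with hBdef
  have hAeq : A = rnorm z / r := rnorm_div z hr
  have hBeq : B = rnorm (fun i => z i - y i) / r := rnorm_div (fun i => z i - y i) hr
  have hMAB : M ≤ A + B := by
    apply max_le
    · rw [hAeq]
      have : 0 ≤ B := by rw [hBdef]; exact rnorm_nonneg _
      linarith
    · rw [hAeq, hBeq, ← add_div]
      rw [← div_self hr.ne']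
      exact (div_le_div_iff_of_pos_right hr).mpr (rnorm_tri z y)
  -- convert RHS exponent
  have h22d : (2:ℕ) ≤ 2*d := by omega
  have hRHS : M ^ ((2:ℝ) - 2*d) = (M ^ (2*d-2 : ℕ))⁻¹ := by
    have he : ((2:ℝ) - 2*d) = -((2*d-2:ℕ):ℝ) := by
      rw [Nat.cast_sub h22d]; push_cast; ring
    rw [he, Real.rpow_neg hM0.le, Real.rpow_natCast]
  rw [hRHS]
  exact core d hd κ₁ κ₂ hκ₁ hκ₂ ((r^2)⁻¹) b M A B (by positivity) hb hM
    (rnorm_nonneg _) (rnorm_nonneg _) hMAB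
end

section
/- There exists U > 0 such that for every u ≥ U: ∫_{√2}^{u} ρ (ln(u/ρ))² / ln(ρ) dρ ≤ u² / (2 ln(u)). -/
open MeasureTheory intervalIntegral

lemma hasDeriv_F (u : ℝ) (hu : 0 < u) {x : ℝ} (hx : 0 < x) :
    HasDerivAt (fun ρ : ℝ => ρ^2/4 *
        (2*(Real.log u - Real.log ρ)^2 + 2*(Real.log u - Real.log ρ) + 1))
      (x * (Real.log (u/x))^2) x := by
  have hL : HasDerivAt (fun ρ : ℝ => Real.log u - Real.log ρ) (0 - x⁻¹) x :=
    (hasDerivAt_const _ _).sub (Real.hasDerivAt_log hx.ne')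
  have hinner : HasDerivAt
      (fun ρ : ℝ => 2*(Real.log u - Real.log ρ)^2 + 2*(Real.log u - Real.log ρ) + 1)
      (2*(2*(Real.log u - Real.log x)^1*(0-x⁻¹)) + 2*(0-x⁻¹) + 0) x :=
    (((hL.pow 2).const_mul 2).add (hL.const_mul 2)).add (hasDerivAt_const _ _)
  have hsq : HasDerivAt (fun ρ : ℝ => ρ^2/4) ((2*x^1)/4) x :=
    (hasDerivAt_pow 2 x).div_const 4
  have := hsq.mul hinner
  refine HasDerivAt.congr_deriv this ?_
  rw [Real.log_div hu.ne' hx.ne']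
  field_simp
  ring

lemma contOn_g (u : ℝ) (hu : 0 < u) {a b : ℝ} (ha : 0 < a) :
    ContinuousOn (fun x : ℝ => x * (Real.log (u/x))^2) (Set.Icc a b) := by
  apply ContinuousOn.mul continuousOn_id
  apply ContinuousOn.pow
  apply ContinuousOn.log
  · exact continuousOn_const.div continuousOn_id
      (fun x hx => ne_of_gt (lt_of_lt_of_le ha hx.1))
  · intro x hx
    exact div_ne_zero hu.ne' (ne_of_gt (lt_of_lt_of_le ha hx.1))

lemma integral_g_le (u m : ℝ) (hu : 0 < u) (hm : 0 < m) (hmu : m ≤ u) :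
    (∫ x in m..u, x * (Real.log (u/x))^2) ≤ u^2/4 := by
  have hInt : IntervalIntegrable (fun x : ℝ => x * (Real.log (u/x))^2) volume m u := by
    apply ContinuousOn.intervalIntegrable
    rw [Set.uIcc_of_le hmu]
    exact contOn_g u hu hm
  have heq : (∫ x in m..u, x * (Real.log (u/x))^2)
      = (fun ρ : ℝ => ρ^2/4 * (2*(Real.log u - Real.log ρ)^2 + 2*(Real.log u - Real.log ρ) + 1)) u
      - (fun ρ : ℝ => ρ^2/4 * (2*(Real.log u - Real.log ρ)^2 + 2*(Real.log u - Real.log ρ) + 1)) m := by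
    refine integral_eq_sub_of_hasDerivAt (f := fun ρ : ℝ => ρ^2/4 * (2*(Real.log u - Real.log ρ)^2 + 2*(Real.log u - Real.log ρ) + 1)) (fun x hx => ?_) hInt
    rw [Set.uIcc_of_le hmu] at hx
    exact hasDeriv_F u hu (lt_of_lt_of_le hm hx.1)
  rw [heq]
  simp only
  have hLm : 0 ≤ Real.log u - Real.log m := by
    have := Real.log_le_log hm hmu
    linarith
  nlinarith [sq_nonneg m, sq_nonneg (Real.log u - Real.log m), sq_nonneg u]

lemma numeric_bound {u : ℝ} (hu : (10:ℝ)^40 ≤ u) :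
    6 * Real.log u ^ 3 ≤ Real.log 2 * Real.sqrt u := by
  have hu0 : (0:ℝ) < u := lt_of_lt_of_le (by norm_num) hu
  set t := u ^ (1/8 : ℝ) with ht
  have ht0 : 0 < t := Real.rpow_pos_of_pos hu0 _
  have hts : (10:ℝ)^5 ≤ t := by
    have h1 : ((10:ℝ)^40) ^ (1/8 : ℝ) ≤ t :=
      Real.rpow_le_rpow (by positivity) hu (by norm_num)
    have h2 : ((10:ℝ)^40) ^ (1/8:ℝ) = 10^5 := by
      rw [show ((10:ℝ)^40) = (10:ℝ)^(40:ℕ) from by norm_num,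
        ← Real.rpow_natCast 10 40, ← Real.rpow_mul (by norm_num)]
      rw [show ((40:ℕ):ℝ)*(1/8) = ((5:ℕ):ℝ) by norm_num, Real.rpow_natCast]
    linarith [h2 ▸ h1]
  have hsqrt : Real.sqrt u = t^4 := by
    rw [Real.sqrt_eq_rpow, ht, show (u ^ (1/8:ℝ))^4 = (u ^ (1/8:ℝ))^(4:ℕ) from rfl,
      ← Real.rpow_natCast (u ^ (1/8:ℝ)) 4, ← Real.rpow_mul hu0.le]
    norm_num
  have hlogt : Real.log t = (1/8) * Real.log u := Real.log_rpow hu0 _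
  have hlt : Real.log t ≤ t - 1 := Real.log_le_sub_one_of_pos ht0
  have hlogu8 : Real.log u ≤ 8 * t := by
    rw [show Real.log u = 8 * Real.log t by rw [hlogt]; ring]
    linarith
  have hlogu0 : 0 ≤ Real.log u := Real.log_nonneg (by linarith)
  have hcube : Real.log u ^ 3 ≤ (8*t)^3 := pow_le_pow_left₀ hlogu0 hlogu8 3
  have hlog2 : (0.6931471803 : ℝ) < Real.log 2 := Real.log_two_gt_d9
  rw [hsqrt]
  nlinarith [pow_nonneg ht0.le 3, mul_le_mul_of_nonneg_left hts (pow_nonneg ht0.le 3),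
    sq_nonneg t, pow_pos ht0 3]

theorem stmt18 :
    ∃ U > 0, ∀ u : ℝ, U ≤ u →
      (∫ ρ in (Real.sqrt 2)..u, ρ * (Real.log (u / ρ)) ^ 2 / Real.log ρ)
        ≤ u ^ 2 / (2 * Real.log u) := by
  refine ⟨10^40, by norm_num, fun u hu => ?_⟩
  have hu2 : (2:ℝ) ≤ u := le_trans (by norm_num) hu
  have hu0 : (0:ℝ) < u := by linarith
  have hlogu : 0 < Real.log u := Real.log_pos (by linarith)
  have hlog2 : 0 < Real.log 2 := Real.log_pos (by norm_num)
  set s := Real.sqrt 2 with hs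
  set m := u ^ (3/4 : ℝ) with hm
  have hs0 : 0 < s := Real.sqrt_pos.mpr (by norm_num)
  have hs1 : 1 < s := by
    have : Real.sqrt 1 < Real.sqrt 2 := Real.sqrt_lt_sqrt (by norm_num) (by norm_num)
    simpa using this
  have hssq : s^2 = 2 := Real.sq_sqrt (by norm_num)
  have hm0 : 0 < m := Real.rpow_pos_of_pos hu0 _
  have hsm : s ≤ m := by
    rw [hs, Real.sqrt_eq_rpow]
    calc (2:ℝ)^(1/2:ℝ) ≤ 2^(3/4:ℝ) :=
          Real.rpow_le_rpow_of_exponent_le (by norm_num) (by norm_num)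
      _ ≤ u^(3/4:ℝ) := Real.rpow_le_rpow (by norm_num) hu2 (by norm_num)
  have hmu : m ≤ u := by
    calc m = u^(3/4:ℝ) := rfl
      _ ≤ u^(1:ℝ) := Real.rpow_le_rpow_of_exponent_le (by linarith) (by norm_num)
      _ = u := Real.rpow_one u
  have hm1 : 1 < m := lt_of_lt_of_le hs1 hsm
  have hsu : s ≤ u := hsm.trans hmu
  have hlogm : Real.log m = (3/4) * Real.log u := Real.log_rpow hu0 _
  have hlogs : Real.log s = Real.log 2 / 2 := Real.log_sqrt (by norm_num)
  -- continuity & integrability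
  have hcont : ContinuousOn (fun x : ℝ => x * Real.log (u/x)^2 / Real.log x) (Set.Icc s u) := by
    apply ContinuousOn.div (contOn_g u hu0 hs0)
    · exact ContinuousOn.log continuousOn_id
        (fun x hx => ne_of_gt (lt_of_lt_of_le hs0 hx.1))
    · intro x hx
      exact (Real.log_pos (lt_of_lt_of_le hs1 hx.1)).ne'
  have hint1 : IntervalIntegrable (fun x : ℝ => x * Real.log (u/x)^2 / Real.log x) volume s m := by
    apply ContinuousOn.intervalIntegrable
    rw [Set.uIcc_of_le hsm]
    exact hcont.mono (Set.Icc_subset_Icc_right hmu)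
  have hint2 : IntervalIntegrable (fun x : ℝ => x * Real.log (u/x)^2 / Real.log x) volume m u := by
    apply ContinuousOn.intervalIntegrable
    rw [Set.uIcc_of_le hmu]
    exact hcont.mono (Set.Icc_subset_Icc_left hsm)
  have hsplit : (∫ ρ in s..u, ρ * Real.log (u/ρ)^2 / Real.log ρ)
      = (∫ ρ in s..m, ρ * Real.log (u/ρ)^2 / Real.log ρ)
        + ∫ ρ in m..u, ρ * Real.log (u/ρ)^2 / Real.log ρ :=
    (integral_add_adjacent_intervals hint1 hint2).symm
  -- bound on [s, m]
  have hb1 : (∫ ρ in s..m, ρ * Real.log (u/ρ)^2 / Real.log ρ)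
      ≤ (2*(Real.log u)^2/Real.log 2) * ((m^2 - s^2)/2) := by
    have hrhsInt : IntervalIntegrable (fun x : ℝ => 2*(Real.log u)^2/Real.log 2 * x) volume s m :=
      (continuous_const.mul continuous_id).intervalIntegrable s m
    have hmono : ∀ x ∈ Set.Icc s m, x * Real.log (u/x)^2 / Real.log x
        ≤ 2*(Real.log u)^2/Real.log 2 * x := by
      intro x hx
      have hx0 : 0 < x := lt_of_lt_of_le hs0 hx.1
      have hx1 : 1 < x := lt_of_lt_of_le hs1 hx.1
      have hxu : x ≤ u := hx.2.trans hmu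
      have hL0 : 0 ≤ Real.log (u/x) := Real.log_nonneg ((one_le_div hx0).mpr hxu)
      have hLle : Real.log (u/x) ≤ Real.log u :=
        Real.log_le_log (by positivity) (div_le_self hu0.le hx1.le)
      have hlogx : Real.log 2 / 2 ≤ Real.log x := by
        rw [← hlogs]; exact Real.log_le_log hs0 hx.1
      rw [show 2*(Real.log u)^2/Real.log 2 * x = x * (Real.log u)^2 / (Real.log 2 / 2) by
        field_simp]
      apply div_le_div₀ (by positivity) _ (by positivity) hlogx
      have hsq : Real.log (u/x)^2 ≤ Real.log u^2 := pow_le_pow_left₀ hL0 hLle 2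
      exact mul_le_mul_of_nonneg_left hsq hx0.le
    calc (∫ ρ in s..m, ρ * Real.log (u/ρ)^2 / Real.log ρ)
        ≤ ∫ x in s..m, 2*(Real.log u)^2/Real.log 2 * x :=
          integral_mono_on hsm hint1 hrhsInt hmono
      _ = (2*(Real.log u)^2/Real.log 2) * ((m^2 - s^2)/2) := by
          rw [intervalIntegral.integral_const_mul, integral_id]
  -- bound on [m, u]
  have hb2 : (∫ ρ in m..u, ρ * Real.log (u/ρ)^2 / Real.log ρ)
      ≤ 4/(3*Real.log u) * (u^2/4) := by
    have hgint : IntervalIntegrable (fun x : ℝ => x * (Real.log (u/x))^2) volume m u := by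
      apply ContinuousOn.intervalIntegrable
      rw [Set.uIcc_of_le hmu]
      exact contOn_g u hu0 hm0
    have hrhsInt : IntervalIntegrable
        (fun x : ℝ => 4/(3*Real.log u) * (x * (Real.log (u/x))^2)) volume m u :=
      hgint.const_mul _
    have hmono : ∀ x ∈ Set.Icc m u, x * Real.log (u/x)^2 / Real.log x
        ≤ 4/(3*Real.log u) * (x * (Real.log (u/x))^2) := by
      intro x hx
      have hx0 : 0 < x := lt_of_lt_of_le hm0 hx.1
      have hlogx : (3/4) * Real.log u ≤ Real.log x := by
        rw [← hlogm]; exact Real.log_le_log hm0 hx.1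
      rw [show 4/(3*Real.log u) * (x * (Real.log (u/x))^2)
          = x * (Real.log (u/x))^2 / ((3/4) * Real.log u) by field_simp]
      apply div_le_div₀ (by positivity) le_rfl (by positivity) hlogx
    calc (∫ ρ in m..u, ρ * Real.log (u/ρ)^2 / Real.log ρ)
        ≤ ∫ x in m..u, 4/(3*Real.log u) * (x * (Real.log (u/x))^2) :=
          integral_mono_on hmu hint2 hrhsInt hmono
      _ = 4/(3*Real.log u) * ∫ x in m..u, x * (Real.log (u/x))^2 := integral_const_mul _ _
      _ ≤ 4/(3*Real.log u) * (u^2/4) := by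
          apply mul_le_mul_of_nonneg_left (integral_g_le u m hu0 hm0 hmu) (by positivity)
  -- combine
  have hS0 : 0 < Real.sqrt u := Real.sqrt_pos.mpr hu0
  have hS2 : Real.sqrt u ^ 2 = u := Real.sq_sqrt hu0.le
  have hm2 : m^2 = u * Real.sqrt u := by
    rw [hm, show (u ^ (3/4:ℝ))^2 = (u ^ (3/4:ℝ))^(2:ℕ) from rfl,
      ← Real.rpow_natCast (u ^ (3/4:ℝ)) 2, ← Real.rpow_mul hu0.le,
      show (3/4:ℝ) * ((2:ℕ):ℝ) = 1 + 1/2 by norm_num, Real.rpow_add hu0,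
      Real.rpow_one, ← Real.sqrt_eq_rpow]
  have hnum : 6 * Real.log u ^ 3 ≤ Real.log 2 * Real.sqrt u := numeric_bound hu
  have hterm1 : (2*(Real.log u)^2/Real.log 2) * ((m^2 - s^2)/2) ≤ u^2/(6*Real.log u) := by
    rw [hm2, hssq]
    rw [div_mul_eq_mul_div, div_le_div_iff₀ hlog2 (by positivity)]
    have h1 : 6 * Real.log u ^ 3 * (u * Real.sqrt u) ≤ Real.log 2 * Real.sqrt u * (u * Real.sqrt u) :=
      mul_le_mul_of_nonneg_right hnum (by positivity)
    have h2 : Real.log 2 * Real.sqrt u * (u * Real.sqrt u) = u^2 * Real.log 2 := by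
      have hss : Real.sqrt u * Real.sqrt u = u := Real.mul_self_sqrt hu0.le
      linear_combination (Real.log 2 * u) * hss
    nlinarith [pow_nonneg hlogu.le 3]
  have hterm2 : 4/(3*Real.log u) * (u^2/4) = u^2/(3*Real.log u) := by
    field_simp
  have hfinal : u^2/(6*Real.log u) + u^2/(3*Real.log u) = u^2/(2*Real.log u) := by
    field_simp
    ring
  rw [hsplit]
  linarith [hb1, hb2, hterm1]
end

section
/- For every a > 0 there exists a constant L > 0 such that for every u ≥ e: ∫_{u}^{∞} (ρ / ln(ρ)) exp(−aρ/u) dρ ≤ L u² / ln(u). -/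
open MeasureTheory Real Set Filter

lemma aux_exp_int (c u : ℝ) (hc : 0 < c) (hu : 0 ≤ u) :
    IntegrableOn (fun x => x * Real.exp (-c * x)) (Set.Ioi u) ∧
    ∫ x in Set.Ioi u, x * Real.exp (-c * x)
      = (u / c + 1 / c ^ 2) * Real.exp (-c * u) := by
  set g : ℝ → ℝ := fun x => -(x / c + 1 / c ^ 2) * Real.exp (-c * x) with hg
  have hderiv : ∀ x ∈ Set.Ici u, HasDerivAt g (x * Real.exp (-c * x)) x := by
    intro x _
    have h1 : HasDerivAt (fun x : ℝ => -(x / c + 1 / c ^ 2)) (-(1/c)) x := by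
      have := ((hasDerivAt_id x).div_const c).add_const (1 / c ^ 2)
      exact this.neg
    have h2 : HasDerivAt (fun x : ℝ => Real.exp (-c * x)) (Real.exp (-c * x) * (-c)) x := by
      have : HasDerivAt (fun x : ℝ => -c * x) (-c) x := by
        simpa using (hasDerivAt_id x).const_mul (-c)
      exact (Real.hasDerivAt_exp (-c * x)).comp x this
    have := h1.mul h2
    refine this.congr_deriv ?_
    field_simp
    ring
  have hpos : ∀ x ∈ Set.Ioi u, 0 ≤ x * Real.exp (-c * x) := fun x hx =>
    mul_nonneg (le_trans hu (le_of_lt hx)) (Real.exp_pos _).le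
  have hlim : Tendsto g atTop (nhds 0) := by
    have h1 : Tendsto (fun x : ℝ => x ^ (1:ℝ) * Real.exp (-c * x)) atTop (nhds 0) :=
      tendsto_rpow_mul_exp_neg_mul_atTop_nhds_zero 1 c hc
    have h1' : Tendsto (fun x : ℝ => x * Real.exp (-c * x)) atTop (nhds 0) := by
      apply h1.congr'
      filter_upwards [eventually_gt_atTop 0] with x hx
      rw [Real.rpow_one]
    have h2 : Tendsto (fun x : ℝ => Real.exp (-c * x)) atTop (nhds 0) := by
      have hlin : Tendsto (fun x : ℝ => -c * x) atTop atBot := by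
        have := tendsto_neg_atTop_atBot.comp (Filter.tendsto_id.const_mul_atTop hc)
        apply this.congr; intro x; simp [Function.comp]
      exact Real.tendsto_exp_atBot.comp hlin
    have : Tendsto (fun x : ℝ => -((1/c) * (x * Real.exp (-c * x)) + (1/c^2) * Real.exp (-c * x)))
        atTop (nhds (-((1/c) * 0 + (1/c^2) * 0))) :=
      (((h1'.const_mul (1/c)).add (h2.const_mul (1/c^2)))).neg
    simp only [mul_zero, add_zero, neg_zero] at this
    apply this.congr
    intro x; simp only [hg]; ring
  constructor
  · exact integrableOn_Ioi_deriv_of_nonneg' hderiv hpos hlim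
  · have := integral_Ioi_of_hasDerivAt_of_nonneg' hderiv hpos hlim
    rw [this]; simp only [hg]; ring

theorem stmt19 (a : ℝ) (ha : 0 < a) :
    ∃ L > 0, ∀ u : ℝ, Real.exp 1 ≤ u →
      (∫ ρ in Set.Ioi u, ρ / Real.log ρ * Real.exp (-a * ρ / u))
        ≤ L * u ^ 2 / Real.log u := by
  refine ⟨(1 / a + 1 / a ^ 2) * Real.exp (-a), by positivity, fun u hu => ?_⟩
  have hu1 : (1:ℝ) ≤ u := le_trans (by simpa using Real.exp_le_exp.2 zero_le_one) hu
  have hu0 : 0 < u := lt_of_lt_of_le one_pos hu1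
  have hlogu : 1 ≤ Real.log u := by
    rw [← Real.log_exp 1]; exact Real.log_le_log (Real.exp_pos 1) hu
  have hlogu0 : 0 < Real.log u := lt_of_lt_of_le one_pos hlogu
  set c := a / u with hc
  have hcpos : 0 < c := div_pos ha hu0
  obtain ⟨hint, hval⟩ := aux_exp_int c u hcpos hu0.le
  -- g := (1 / log u) * (x * exp(-c x))
  have hmono : ∀ᵐ x ∂(volume.restrict (Set.Ioi u)),
      x / Real.log x * Real.exp (-a * x / u) ≤ (1 / Real.log u) * (x * Real.exp (-c * x)) := by
    filter_upwards [ae_restrict_mem measurableSet_Ioi] with x hx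
    have hxu : u < x := hx
    have hx0 : 0 < x := lt_trans hu0 hxu
    have hlogx : Real.log u ≤ Real.log x := Real.log_le_log hu0 hxu.le
    have hlogx0 : 0 < Real.log x := lt_of_lt_of_le hlogu0 hlogx
    have hexp : -a * x / u = -c * x := by rw [hc]; field_simp
    rw [hexp]
    have : x / Real.log x ≤ x / Real.log u :=
      div_le_div_of_nonneg_left hx0.le hlogu0 hlogx
    calc x / Real.log x * Real.exp (-c * x)
        ≤ x / Real.log u * Real.exp (-c * x) :=
          mul_le_mul_of_nonneg_right this (Real.exp_pos _).le
      _ = (1 / Real.log u) * (x * Real.exp (-c * x)) := by ring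
  have hnonneg : ∀ᵐ x ∂(volume.restrict (Set.Ioi u)),
      0 ≤ x / Real.log x * Real.exp (-a * x / u) := by
    filter_upwards [ae_restrict_mem measurableSet_Ioi] with x hx
    have hx0 : 0 < x := lt_trans hu0 hx
    have hlogx0 : 0 < Real.log x :=
      lt_of_lt_of_le hlogu0 (Real.log_le_log hu0 (le_of_lt hx))
    positivity
  have hbound : (∫ ρ in Set.Ioi u, ρ / Real.log ρ * Real.exp (-a * ρ / u))
      ≤ ∫ x in Set.Ioi u, (1 / Real.log u) * (x * Real.exp (-c * x)) :=
    integral_mono_of_nonneg hnonneg (hint.const_mul _) hmono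
  refine hbound.trans ?_
  rw [integral_const_mul, hval]
  have hcu : -c * u = -a := by rw [hc]; field_simp
  rw [hcu]
  have h1 : u / c = u ^ 2 / a := by rw [hc]; field_simp
  have h2 : 1 / c ^ 2 = u ^ 2 / a ^ 2 := by rw [hc]; field_simp
  rw [h1, h2]
  have : 1 / Real.log u * ((u ^ 2 / a + u ^ 2 / a ^ 2) * Real.exp (-a))
      = (1 / a + 1 / a ^ 2) * Real.exp (-a) * u ^ 2 / Real.log u := by
    field_simp
  rw [this]
end
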